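/- arXiv:2201.01986 — 5 statements merged into one kernel-verified Lean document; each statement's English description precedes it below -/
import Mathlib

section
/- Let Ω ⊆ ℝ³ be open and let P : Ω → ℝ be three times continuously differentiable and harmonic (ΔP = 0 on Ω). Then the vector field σ(x) = x × ∇P(x) satisfies ∇×σ = −∇(P + ⟨x, ∇P⟩) on Ω, and consequently ∇×(∇×σ) = 0, i.e. σ satisfies the flat momentum constraint. -/
/-!
For any differentiable field `g` the product rule gives `∇×(x × g) = (∇·g) x − 2g − (x·∇)g`.
For `g = ∇P`, symmetry of the Hessian turns `2∇P + (x·∇)∇P` into `∇(P + ⟨x, ∇P⟩)`, and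
harmonicity kills the first term. Hence near every point of `Ω` the curl of `σ` is a gradient,
so its curl vanishes; and the momentum-constraint expression is, term by term, `−∇×(∇×σ)`.
-/

open scoped Topology

/-- Partial derivative `∂ᵢ f` of a scalar function on `ℝⁿ` (as `Fin n → ℝ`). -/
noncomputable def pd {n : ℕ} (i : Fin n) (f : (Fin n → ℝ) → ℝ) (x : Fin n → ℝ) : ℝ :=
  fderiv ℝ f x (Pi.single i 1)

/-- The gradient of a scalar function on `ℝⁿ`. -/
noncomputable def grad {n : ℕ} (f : (Fin n → ℝ) → ℝ) (x : Fin n → ℝ) : Fin n → ℝ :=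
  fun i => pd i f x

/-- The curl of a vector field on `ℝ³`: `(∇×σ)_i = ε_{ijk} ∂_j σ_k`. -/
noncomputable def curl (σ : (Fin 3 → ℝ) → Fin 3 → ℝ) (x : Fin 3 → ℝ) : Fin 3 → ℝ :=
  ![pd 1 (fun y => σ y 2) x - pd 2 (fun y => σ y 1) x,
    pd 2 (fun y => σ y 0) x - pd 0 (fun y => σ y 2) x,
    pd 0 (fun y => σ y 1) x - pd 1 (fun y => σ y 0) x]

open Matrix

section PartialDerivatives

variable {n : ℕ} {f g : (Fin n → ℝ) → ℝ} {x : Fin n → ℝ}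

lemma pd_congr (h : f =ᶠ[𝓝 x] g) (i : Fin n) : pd i f x = pd i g x := by
  rw [pd, pd, h.fderiv_eq]

lemma pd_neg (i : Fin n) : pd i (fun y => -f y) x = -pd i f x := by
  simp [pd, fderiv_fun_neg]

lemma pd_const (i : Fin n) (c : ℝ) : pd i (fun _ => c) x = 0 := by
  simp [pd]

lemma pd_sub_comm (i : Fin n) : pd i (fun y => f y - g y) x = -pd i (fun y => g y - f y) x := by
  rw [← pd_neg]
  simp only [neg_sub]

lemma pd_sub (hf : DifferentiableAt ℝ f x) (hg : DifferentiableAt ℝ g x) (i : Fin n) :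
    pd i (fun y => f y - g y) x = pd i f x - pd i g x := by
  simp [pd, fderiv_fun_sub hf hg]

lemma pd_add (hf : DifferentiableAt ℝ f x) (hg : DifferentiableAt ℝ g x) (i : Fin n) :
    pd i (fun y => f y + g y) x = pd i f x + pd i g x := by
  simp [pd, fderiv_fun_add hf hg]

lemma pd_sum {ι : Type*} {s : Finset ι} {F : ι → (Fin n → ℝ) → ℝ}
    (hF : ∀ k ∈ s, DifferentiableAt ℝ (F k) x) (i : Fin n) :
    pd i (fun y => ∑ k ∈ s, F k y) x = ∑ k ∈ s, pd i (F k) x := by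
  simp [pd, fderiv_fun_sum hF]

lemma pd_coord_mul (hf : DifferentiableAt ℝ f x) (i a : Fin n) :
    pd i (fun y => y a * f y) x = x a * pd i f x + if a = i then f x else 0 := by
  have hcoord : HasFDerivAt (fun y : Fin n → ℝ => y a) (ContinuousLinearMap.proj a) x :=
    hasFDerivAt_apply (𝕜 := ℝ) a x
  simp [pd, fderiv_fun_mul hcoord.differentiableAt hf, hcoord.fderiv, Pi.single_apply]

lemma contDiffAt_pd {m : WithTop ℕ∞} (hf : ContDiffAt ℝ (m + 1) f x) (i : Fin n) :
    ContDiffAt ℝ m (fun y => pd i f y) x :=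
  (hf.fderiv_right le_rfl).clm_apply contDiffAt_const

lemma pd_pd_comm (hf : ContDiffAt ℝ 2 f x) (i j : Fin n) :
    pd i (fun y => pd j f y) x = pd j (fun y => pd i f y) x := by
  have hd : DifferentiableAt ℝ (fderiv ℝ f) x :=
    (hf.fderiv_right (m := 1) le_rfl).differentiableAt one_ne_zero
  have hsecond : ∀ a b : Fin n, pd a (fun y => pd b f y) x
      = fderiv ℝ (fderiv ℝ f) x (Pi.single a 1) (Pi.single b 1) := by
    intro a b
    simp [pd, fderiv_clm_apply hd (differentiableAt_const _)]
  rw [hsecond, hsecond]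
  exact hf.isSymmSndFDerivAt (by simp [minSmoothness_of_isRCLikeNormedField]) _ _

lemma grad_neg : grad (fun y => -f y) x = -grad f x :=
  funext fun i => pd_neg i

lemma grad_add_sum_coord_mul_pd (hf : ContDiffAt ℝ 2 f x) :
    grad (fun y => f y + ∑ i, y i * pd i f y) x =
      (2 : ℝ) • grad f x + fun k => ∑ i, x i * pd i (fun y => pd k f y) x := by
  have hpd : ∀ i, DifferentiableAt ℝ (fun y => pd i f y) x :=
    fun i => (contDiffAt_pd (m := 1) hf i).differentiableAt one_ne_zero
  have hprod : ∀ i, DifferentiableAt ℝ (fun y : Fin n → ℝ => y i * pd i f y) x :=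
    fun i => (differentiableAt_apply i x).mul (hpd i)
  ext k
  rw [grad, pd_add (hf.differentiableAt two_ne_zero) (DifferentiableAt.fun_sum fun i _ => hprod i),
    pd_sum fun i _ => hprod i]
  simp only [pd_coord_mul (hpd _), pd_pd_comm hf k, Finset.sum_add_distrib, Finset.sum_ite_eq',
    Finset.mem_univ, ↓reduceIte, Pi.add_apply, Pi.smul_apply, grad, smul_eq_mul]
  ring

end PartialDerivatives

section ThreeDimensional

variable {x : Fin 3 → ℝ}

lemma curl_id_cross {g : (Fin 3 → ℝ) → Fin 3 → ℝ}
    (hg : ∀ k, DifferentiableAt ℝ (fun y => g y k) x) :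
    curl (fun y => crossProduct y (g y)) x =
      (∑ i, pd i (fun y => g y i) x) • x - (2 : ℝ) • g x
        - fun k => ∑ i, x i * pd i (fun y => g y k) x := by
  have hprod : ∀ a b, DifferentiableAt ℝ (fun y : Fin 3 → ℝ => y a * g y b) x :=
    fun a b => (differentiableAt_apply a x).mul (hg b)
  ext k
  fin_cases k <;>
    simp only [curl, cross_apply, pd_sub (hprod _ _) (hprod _ _), pd_coord_mul (hg _),
      Fin.sum_univ_three, Fin.isValue, Fin.zero_eta, Fin.mk_one, Fin.reduceFinMk, Fin.reduceEq,
      Nat.succ_eq_add_one, Nat.reduceAdd, cons_val, cons_val_one, cons_val_zero, zero_ne_one,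
      one_ne_zero, ↓reduceIte, add_zero, Pi.sub_apply, Pi.smul_apply, smul_eq_mul] <;>
    ring

lemma curl_id_cross_grad {P : (Fin 3 → ℝ) → ℝ} (hP : ContDiffAt ℝ 2 P x) :
    curl (fun y => crossProduct y (grad P y)) x =
      (∑ i, pd i (fun y => pd i P y) x) • x - grad (fun y => P y + ∑ i, y i * pd i P y) x := by
  have hgrad : ∀ k, DifferentiableAt ℝ (fun y => grad P y k) x :=
    fun k => (contDiffAt_pd (m := 1) hP k).differentiableAt one_ne_zero
  rw [curl_id_cross hgrad, grad_add_sum_coord_mul_pd hP]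
  simp only [grad]
  abel

lemma curl_congr {σ τ : (Fin 3 → ℝ) → Fin 3 → ℝ} (h : σ =ᶠ[𝓝 x] τ) :
    curl σ x = curl τ x := by
  have hk : ∀ k, (fun y => σ y k) =ᶠ[𝓝 x] fun y => τ y k := fun k => h.fun_comp (· k)
  simp only [curl, pd_congr (hk _)]

lemma curl_grad {f : (Fin 3 → ℝ) → ℝ} (hf : ContDiffAt ℝ 2 f x) :
    curl (grad f) x = 0 := by
  ext k
  fin_cases k <;> simp [curl, grad, pd_pd_comm hf]

lemma sum_pd_pd_sub_pd_pd_eq_neg_curl_curl (τ : (Fin 3 → ℝ) → Fin 3 → ℝ) (j : Fin 3) :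
    ∑ i, pd i (fun y => pd i (fun z => τ z j) y - pd j (fun z => τ z i) y) x =
      -curl (curl τ) x j := by
  have swap : ∀ i k l : Fin 3,
      pd i (fun y => pd k (fun z => τ z l) y - pd l (fun z => τ z k) y) x =
        -pd i (fun y => pd l (fun z => τ z k) y - pd k (fun z => τ z l) y) x :=
    fun i k l => pd_sub_comm i
  fin_cases j <;>
    simp only [Fin.sum_univ_three, curl, sub_self, pd_const, swap 1 1 0, swap 2 2 1, swap 0 0 2,
      Fin.isValue, Fin.zero_eta, Fin.mk_one, Fin.reduceFinMk, cons_val, cons_val_one,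
      cons_val_zero, zero_add, add_zero] <;>
    ring

end ThreeDimensional

/-- If `P` is C³ and harmonic on an open set `Ω ⊆ ℝ³`, then `σ(x) = x × ∇P(x)` satisfies
`∇×σ = −∇(P + ⟨x, ∇P⟩)` on `Ω`, hence `∇×(∇×σ) = 0` on `Ω`, i.e. `σ` satisfies the flat
momentum constraint `∑ᵢ ∂ᵢ(∂ᵢσⱼ − ∂ⱼσᵢ) = 0` on `Ω`. -/
theorem rotational_harmonic_field_satisfies_momentum_constraint
    (Ω : Set (Fin 3 → ℝ)) (hΩ : IsOpen Ω)
    (P : (Fin 3 → ℝ) → ℝ) (hP : ContDiffOn ℝ 3 P Ω)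
    (hharm : ∀ x ∈ Ω, ∑ i : Fin 3, pd i (fun y => pd i P y) x = 0)
    (σ : (Fin 3 → ℝ) → Fin 3 → ℝ)
    (hσ : ∀ x, σ x = crossProduct x (grad P x)) :
    (∀ x ∈ Ω, curl σ x = - grad (fun y => P y + ∑ i : Fin 3, y i * pd i P y) x) ∧
    (∀ x ∈ Ω, curl (fun y => curl σ y) x = 0) ∧
    (∀ (j : Fin 3), ∀ x ∈ Ω,
      ∑ i : Fin 3,
        pd i (fun y => pd i (fun z => σ z j) y - pd j (fun z => σ z i) y) x = 0) := by
  set Q : (Fin 3 → ℝ) → ℝ := fun y => P y + ∑ i : Fin 3, y i * pd i P y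
  have hP3 : ∀ x ∈ Ω, ContDiffAt ℝ 3 P x := fun x hx => hP.contDiffAt (hΩ.mem_nhds hx)
  have curl_σ : ∀ x ∈ Ω, curl σ x = -grad Q x := by
    intro x hx
    rw [funext hσ, curl_id_cross_grad ((hP3 x hx).of_le (by norm_num)), hharm x hx, zero_smul,
      zero_sub]
  have curl_curl_σ : ∀ x ∈ Ω, curl (curl σ) x = 0 := by
    intro x hx
    have hQ : ContDiffAt ℝ 2 (fun y => -Q y) x := by
      refine ((hP3 x hx).of_le (by norm_num)).add (ContDiffAt.sum fun i _ => ?_) |>.neg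
      exact (contDiff_apply ℝ ℝ i).contDiffAt.mul (contDiffAt_pd (hP3 x hx) i)
    have hev : curl σ =ᶠ[𝓝 x] grad fun y => -Q y := by
      filter_upwards [hΩ.mem_nhds hx] with y hy
      rw [curl_σ y hy, grad_neg]
    rw [curl_congr hev, curl_grad hQ]
  refine ⟨curl_σ, curl_curl_σ, fun j x hx => ?_⟩
  rw [sum_pd_pd_sub_pd_pd_eq_neg_curl_curl, curl_curl_σ x hx, Pi.zero_apply, neg_zero]
end

section
/- Let c ∈ ℝ and let α : ℝ² → ℝ be twice continuously differentiable, and set σ(x,y) = c·(−y, x) + ∇α(x,y). Then at every point the flat Hamiltonian constraint expression satisfies (∑_i ∂_i σ^i)² − ∑_{i,j} ∂_{(i} σ_{j)} ∂^{(i} σ^{j)} = 2(∂_x² α · ∂_y² α − (∂_x ∂_y α)²). In particular σ satisfies the flat Hamiltonian constraint (the left-hand side vanishing identically) if and only if α satisfies the homogeneous real Monge–Ampère equation (∂_x∂_y α)² − (∂_x² α)(∂_y² α) = 0 everywhere. -/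
/-- The flat Hamiltonian-constraint expression `(∑ᵢ ∂ᵢσⁱ)² − ∑_{i,j} ∂₍ᵢσⱼ₎ ∂⁽ⁱσʲ⁾`
of a vector field `σ` on `ℝⁿ`, where `∂₍ᵢσⱼ₎ = ½(∂ᵢσⱼ + ∂ⱼσᵢ)`. -/
noncomputable def hamExpr {n : ℕ} (σ : (Fin n → ℝ) → Fin n → ℝ) (x : Fin n → ℝ) : ℝ :=
  (∑ i : Fin n, pd i (fun y => σ y i) x) ^ 2 -
    ∑ i : Fin n, ∑ j : Fin n,
      ((pd i (fun y => σ y j) x + pd j (fun y => σ y i) x) / 2) *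
        ((pd i (fun y => σ y j) x + pd j (fun y => σ y i) x) / 2)

/-- For `σ = c·(−y, x) + ∇α` with `α` of class C², the flat Hamiltonian-constraint expression
equals `2(∂ₓ²α·∂ᵧ²α − (∂ₓ∂ᵧα)²)` pointwise; in particular `σ` satisfies the flat Hamiltonian
constraint iff `α` satisfies the homogeneous real Monge–Ampère equation. -/
theorem hamiltonian_constraint_iff_hrma
    (c : ℝ) (α : (Fin 2 → ℝ) → ℝ) (hα : ContDiff ℝ 2 α)
    (σ : (Fin 2 → ℝ) → Fin 2 → ℝ)
    (hσ : ∀ x, σ x = fun i => c * (![-(x 1), x 0] i) + pd i α x) :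
    (∀ x : Fin 2 → ℝ,
      hamExpr σ x =
        2 * (pd 0 (fun y => pd 0 α y) x * pd 1 (fun y => pd 1 α y) x
              - (pd 0 (fun y => pd 1 α y) x) ^ 2)) ∧
    ((∀ x : Fin 2 → ℝ, hamExpr σ x = 0) ↔
      (∀ x : Fin 2 → ℝ,
        (pd 0 (fun y => pd 1 α y) x) ^ 2
          - pd 0 (fun y => pd 0 α y) x * pd 1 (fun y => pd 1 α y) x = 0)) := by
  have hd : Differentiable ℝ α := hα.differentiable (by norm_num)
  have hα1 : ContDiff ℝ 1 (fderiv ℝ α) := (hα.fderiv_right (by norm_num))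
  have hd1 : Differentiable ℝ (fderiv ℝ α) := hα1.differentiable one_ne_zero
  have hpd : ∀ j : Fin 2, Differentiable ℝ (fun y => pd j α y) := by
    intro j y
    exact (hd1 y).clm_apply (differentiableAt_const _)
  have hsymm : ∀ x : Fin 2 → ℝ,
      pd 1 (fun y => pd 0 α y) x = pd 0 (fun y => pd 1 α y) x := by
    intro x
    have hsec : ∀ i j : Fin 2, pd i (fun y => pd j α y) x
        = fderiv ℝ (fderiv ℝ α) x (Pi.single i 1) (Pi.single j 1) := by
      intro i j
      show fderiv ℝ (fun y => fderiv ℝ α y (Pi.single j 1)) x (Pi.single i 1) = _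
      rw [fderiv_clm_apply (hd1 x) (differentiableAt_const _)]
      simp
    rw [hsec, hsec]
    exact second_derivative_symmetric (fun y => (hd y).hasFDerivAt)
      (hd1 x).hasFDerivAt _ _
  have hlin : ∀ (j : Fin 2) (x : Fin 2 → ℝ),
      HasFDerivAt (fun y : Fin 2 → ℝ => (![-(y 1), y 0] : Fin 2 → ℝ) j)
        ((![-(ContinuousLinearMap.proj 1), ContinuousLinearMap.proj 0] :
            Fin 2 → (Fin 2 → ℝ) →L[ℝ] ℝ) j) x := by
    intro j x
    fin_cases j
    · simpa using (hasFDerivAt_apply (𝕜 := ℝ) (F' := fun _ : Fin 2 => ℝ) 1 x).fun_neg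
    · simpa using hasFDerivAt_apply (𝕜 := ℝ) (F' := fun _ : Fin 2 => ℝ) 0 x
  have keyσ : ∀ (k j : Fin 2) (x : Fin 2 → ℝ),
      pd k (fun y => σ y j) x =
        c * ((![-(ContinuousLinearMap.proj 1), ContinuousLinearMap.proj 0] :
            Fin 2 → (Fin 2 → ℝ) →L[ℝ] ℝ) j) (Pi.single k 1)
          + pd k (fun y => pd j α y) x := by
    intro k j x
    have hfun : (fun y => σ y j)
        = fun y => c * ((![-(y 1), y 0] : Fin 2 → ℝ) j) + pd j α y := by
      funext y; rw [hσ]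
    have H : HasFDerivAt (fun y => c * ((![-(y 1), y 0] : Fin 2 → ℝ) j) + pd j α y)
        (c • ((![-(ContinuousLinearMap.proj 1), ContinuousLinearMap.proj 0] :
            Fin 2 → (Fin 2 → ℝ) →L[ℝ] ℝ) j)
          + fderiv ℝ (fun y => pd j α y) x) x :=
      ((hlin j x).const_mul c).add (hpd j x).hasFDerivAt
    show fderiv ℝ (fun y => σ y j) x (Pi.single k 1) = _
    rw [hfun, H.fderiv]
    simp [pd]
  have main : ∀ x : Fin 2 → ℝ,
      hamExpr σ x =
        2 * (pd 0 (fun y => pd 0 α y) x * pd 1 (fun y => pd 1 α y) x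
              - (pd 0 (fun y => pd 1 α y) x) ^ 2) := by
    intro x
    have v00 : pd 0 (fun y => σ y 0) x = pd 0 (fun y => pd 0 α y) x := by
      rw [keyσ]; simp [Pi.single_apply]
    have v11 : pd 1 (fun y => σ y 1) x = pd 1 (fun y => pd 1 α y) x := by
      rw [keyσ]; simp [Pi.single_apply]
    have v01 : pd 0 (fun y => σ y 1) x = c + pd 0 (fun y => pd 1 α y) x := by
      rw [keyσ]; simp [Pi.single_apply]
    have v10 : pd 1 (fun y => σ y 0) x = -c + pd 0 (fun y => pd 1 α y) x := by
      rw [keyσ, hsymm]; simp [Pi.single_apply]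
    simp only [hamExpr, Fin.sum_univ_two, v00, v11, v01, v10]
    ring
  refine ⟨main, ?_⟩
  constructor
  · intro h x
    have := h x
    rw [main x] at this
    linarith
  · intro h x
    rw [main x]
    have := h x
    linarith
end

section
/- Let R > 0 and let α be a smooth real-valued function on an open neighborhood of the closed disk D_R = {x ∈ ℝ² : |x| ≤ R}, whose normal (radial) derivative vanishes at every point of the boundary circle |x| = R. Then ∫_{D_R} [(Δα)² − ‖Hess α‖²_F] dA = (1/R²) ∮_{|x|=R} (∂_θ α)² dθ, where ∂_θ α is the derivative of α with respect to the angular coordinate on the circle of radius R. -/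
open MeasureTheory Real

/-- Partial derivative in the first coordinate direction on `ℝ × ℝ`. -/
noncomputable def pdx (f : ℝ × ℝ → ℝ) (x : ℝ × ℝ) : ℝ :=
  fderiv ℝ f x (1, 0)

/-- Partial derivative in the second coordinate direction on `ℝ × ℝ`. -/
noncomputable def pdy (f : ℝ × ℝ → ℝ) (x : ℝ × ℝ) : ℝ :=
  fderiv ℝ f x (0, 1)

noncomputable def g1 (α : ℝ × ℝ → ℝ) : ℝ × ℝ → ℝ :=
  fun x => pdx α x * pdy (pdy α) x - pdy α x * pdx (pdy α) x
noncomputable def g2 (α : ℝ × ℝ → ℝ) : ℝ × ℝ → ℝ :=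
  fun x => pdy α x * pdx (pdx α) x - pdx α x * pdy (pdx α) x

section Aux
variable {U : Set (ℝ × ℝ)} {f g : ℝ × ℝ → ℝ} {x : ℝ × ℝ}

lemma pdx_congr_on (hU : IsOpen U) (h : Set.EqOn f g U) (hx : x ∈ U) :
    pdx f x = pdx g x := by
  unfold pdx
  rw [Filter.EventuallyEq.fderiv_eq (Filter.eventuallyEq_of_mem (hU.mem_nhds hx) h)]

lemma pdy_congr_on (hU : IsOpen U) (h : Set.EqOn f g U) (hx : x ∈ U) :
    pdy f x = pdy g x := by
  unfold pdy
  rw [Filter.EventuallyEq.fderiv_eq (Filter.eventuallyEq_of_mem (hU.mem_nhds hx) h)]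


end Aux

section Aux2
variable {U : Set (ℝ × ℝ)} {f g : ℝ × ℝ → ℝ} {x : ℝ × ℝ}


lemma two_le_inf : (2 : WithTop ℕ∞) ≤ ((⊤:ℕ∞) : WithTop ℕ∞) := by
  rw [show ((2:WithTop ℕ∞)) = ((2:ℕ∞):WithTop ℕ∞) from rfl]
  exact WithTop.coe_le_coe.2 le_top

lemma contDiffOn_pdx (hU : IsOpen U) (hf : ContDiffOn ℝ (⊤:ℕ∞) f U) :
    ContDiffOn ℝ (⊤:ℕ∞) (pdx f) U :=
  (hf.fderiv_of_isOpen hU (by simp)).clm_apply contDiffOn_const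

lemma contDiffOn_pdy (hU : IsOpen U) (hf : ContDiffOn ℝ (⊤:ℕ∞) f U) :
    ContDiffOn ℝ (⊤:ℕ∞) (pdy f) U :=
  (hf.fderiv_of_isOpen hU (by simp)).clm_apply contDiffOn_const

lemma diffAt_of_sm (hU : IsOpen U) (hf : ContDiffOn ℝ (⊤:ℕ∞) f U) (hx : x ∈ U) :
    DifferentiableAt ℝ f x :=
  (hf.contDiffAt (hU.mem_nhds hx)).differentiableAt (by simp)

lemma pdx_mul (hp : DifferentiableAt ℝ f x) (hq : DifferentiableAt ℝ g x) :
    pdx (fun y => f y * g y) x = pdx f x * g x + f x * pdx g x := by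
  unfold pdx
  rw [fderiv_fun_mul hp hq]
  simp [ContinuousLinearMap.add_apply]
  ring

lemma pdy_mul (hp : DifferentiableAt ℝ f x) (hq : DifferentiableAt ℝ g x) :
    pdy (fun y => f y * g y) x = pdy f x * g x + f x * pdy g x := by
  unfold pdy
  rw [fderiv_fun_mul hp hq]
  simp [ContinuousLinearMap.add_apply]
  ring

lemma pdx_sub (hp : DifferentiableAt ℝ f x) (hq : DifferentiableAt ℝ g x) :
    pdx (fun y => f y - g y) x = pdx f x - pdx g x := by
  unfold pdx; rw [fderiv_fun_sub hp hq]; simp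

lemma pdy_sub (hp : DifferentiableAt ℝ f x) (hq : DifferentiableAt ℝ g x) :
    pdy (fun y => f y - g y) x = pdy f x - pdy g x := by
  unfold pdy; rw [fderiv_fun_sub hp hq]; simp

lemma pdx_pdy_comm (hU : IsOpen U) (hf : ContDiffOn ℝ (⊤:ℕ∞) f U) (hx : x ∈ U) :
    pdx (pdy f) x = pdy (pdx f) x := by
  have hct : ContDiffAt ℝ (⊤:ℕ∞) f x := hf.contDiffAt (hU.mem_nhds hx)
  have hsym := hct.isSymmSndFDerivAt (by simpa [minSmoothness_of_isRCLikeNormedField] using two_le_inf)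
  have hd : DifferentiableAt ℝ (fderiv ℝ f) x :=
    (hct.fderiv_right (m := (⊤:ℕ∞)) (by exact_mod_cast le_top)).differentiableAt
      (by simp)
  have h1 : pdx (pdy f) x = fderiv ℝ (fderiv ℝ f) x (1,0) (0,1) := by
    unfold pdx pdy
    rw [fderiv_clm_apply hd (differentiableAt_const _)]
    simp
  have h2 : pdy (pdx f) x = fderiv ℝ (fderiv ℝ f) x (0,1) (1,0) := by
    unfold pdx pdy
    rw [fderiv_clm_apply hd (differentiableAt_const _)]
    simp
  rw [h1, h2]
  exact hsym _ _

end Aux2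

section Div
variable {U : Set (ℝ × ℝ)} {α : ℝ × ℝ → ℝ} {x : ℝ × ℝ}

lemma divergence_identity (hU : IsOpen U) (hα : ContDiffOn ℝ (⊤:ℕ∞) α U) (hx : x ∈ U) :
    (pdx (pdx α) x + pdy (pdy α) x) ^ 2 -
      ((pdx (pdx α) x) ^ 2 + (pdx (pdy α) x) ^ 2 + (pdy (pdx α) x) ^ 2 + (pdy (pdy α) x) ^ 2)
    = pdx (g1 α) x + pdy (g2 α) x := by
  have sx := contDiffOn_pdx hU hα
  have sy := contDiffOn_pdy hU hα
  have sxx := contDiffOn_pdx hU sx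
  have sxy := contDiffOn_pdx hU sy
  have syx := contDiffOn_pdy hU sx
  have syy := contDiffOn_pdy hU sy
  have dx : DifferentiableAt ℝ (pdx α) x := diffAt_of_sm hU sx hx
  have dy : DifferentiableAt ℝ (pdy α) x := diffAt_of_sm hU sy hx
  have dxx : DifferentiableAt ℝ (pdx (pdx α)) x := diffAt_of_sm hU sxx hx
  have dxy : DifferentiableAt ℝ (pdx (pdy α)) x := diffAt_of_sm hU sxy hx
  have dyx : DifferentiableAt ℝ (pdy (pdx α)) x := diffAt_of_sm hU syx hx
  have dyy : DifferentiableAt ℝ (pdy (pdy α)) x := diffAt_of_sm hU syy hx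
  have hg1 : pdx (g1 α) x
      = (pdx (pdx α) x * pdy (pdy α) x + pdx α x * pdx (pdy (pdy α)) x)
        - (pdx (pdy α) x * pdx (pdy α) x + pdy α x * pdx (pdx (pdy α)) x) := by
    unfold g1
    rw [pdx_sub (f := fun y => pdx α y * pdy (pdy α) y) (g := fun y => pdy α y * pdx (pdy α) y) (dx.mul dyy) (dy.mul dxy), pdx_mul dx dyy, pdx_mul dy dxy]
  have hg2 : pdy (g2 α) x
      = (pdy (pdy α) x * pdx (pdx α) x + pdy α x * pdy (pdx (pdx α)) x)
        - (pdy (pdx α) x * pdy (pdx α) x + pdx α x * pdy (pdy (pdx α)) x) := by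
    unfold g2
    rw [pdy_sub (f := fun y => pdy α y * pdx (pdx α) y) (g := fun y => pdx α y * pdy (pdx α) y) (dy.mul dxx) (dx.mul dyx), pdy_mul dy dxx, pdy_mul dx dyx]
  have mixedEq : Set.EqOn (pdx (pdy α)) (pdy (pdx α)) U := fun y hy =>
    pdx_pdy_comm hU hα hy
  have e1 : pdx (pdy (pdy α)) x = pdy (pdy (pdx α)) x := by
    rw [pdx_pdy_comm hU sy hx, pdy_congr_on hU mixedEq hx]
  have e2 : pdy (pdx (pdx α)) x = pdx (pdx (pdy α)) x := by
    rw [← pdx_pdy_comm hU sx hx, ← pdx_congr_on hU mixedEq hx]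
  rw [hg1, hg2, e1, e2]
  ring

end Div

noncomputable def pol (p : ℝ × ℝ) : ℝ × ℝ := (p.1 * Real.cos p.2, p.1 * Real.sin p.2)

noncomputable def uu (α : ℝ × ℝ → ℝ) (p : ℝ × ℝ) : ℝ :=
  p.1 * (Real.cos p.2 * g1 α (pol p) + Real.sin p.2 * g2 α (pol p))

noncomputable def vv (α : ℝ × ℝ → ℝ) (p : ℝ × ℝ) : ℝ :=
  Real.cos p.2 * g2 α (pol p) - Real.sin p.2 * g1 α (pol p)

noncomputable def ur (α : ℝ × ℝ → ℝ) (p : ℝ × ℝ) : ℝ :=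
  (Real.cos p.2 * g1 α (pol p) + Real.sin p.2 * g2 α (pol p)) +
    p.1 * (Real.cos p.2 * (Real.cos p.2 * pdx (g1 α) (pol p) + Real.sin p.2 * pdy (g1 α) (pol p))
      + Real.sin p.2 * (Real.cos p.2 * pdx (g2 α) (pol p) + Real.sin p.2 * pdy (g2 α) (pol p)))

noncomputable def vt (α : ℝ × ℝ → ℝ) (p : ℝ × ℝ) : ℝ :=
  (-Real.sin p.2 * g2 α (pol p)
    + Real.cos p.2 * (-(p.1 * Real.sin p.2) * pdx (g2 α) (pol p)
        + (p.1 * Real.cos p.2) * pdy (g2 α) (pol p)))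
  - (Real.cos p.2 * g1 α (pol p)
    + Real.sin p.2 * (-(p.1 * Real.sin p.2) * pdx (g1 α) (pol p)
        + (p.1 * Real.cos p.2) * pdy (g1 α) (pol p)))

section Polar
variable {U : Set (ℝ × ℝ)} {α G : ℝ × ℝ → ℝ} {x : ℝ × ℝ}

lemma contDiffOn_g1 (hU : IsOpen U) (hα : ContDiffOn ℝ (⊤:ℕ∞) α U) :
    ContDiffOn ℝ (⊤:ℕ∞) (g1 α) U :=
  ((contDiffOn_pdx hU hα).mul (contDiffOn_pdy hU (contDiffOn_pdy hU hα))).sub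
    ((contDiffOn_pdy hU hα).mul (contDiffOn_pdx hU (contDiffOn_pdy hU hα)))

lemma contDiffOn_g2 (hU : IsOpen U) (hα : ContDiffOn ℝ (⊤:ℕ∞) α U) :
    ContDiffOn ℝ (⊤:ℕ∞) (g2 α) U :=
  ((contDiffOn_pdy hU hα).mul (contDiffOn_pdx hU (contDiffOn_pdx hU hα))).sub
    ((contDiffOn_pdx hU hα).mul (contDiffOn_pdy hU (contDiffOn_pdx hU hα)))

lemma hasDerivAt_pol_r (θ : ℝ) (r : ℝ)
    (hG : DifferentiableAt ℝ G (r * Real.cos θ, r * Real.sin θ)) :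
    HasDerivAt (fun s : ℝ => G (s * Real.cos θ, s * Real.sin θ))
      (Real.cos θ * pdx G (r * Real.cos θ, r * Real.sin θ)
        + Real.sin θ * pdy G (r * Real.cos θ, r * Real.sin θ)) r := by
  have hP : HasDerivAt (fun s : ℝ => ((s * Real.cos θ, s * Real.sin θ) : ℝ × ℝ))
      (Real.cos θ, Real.sin θ) r :=
    (hasDerivAt_mul_const (Real.cos θ)).prodMk (hasDerivAt_mul_const (Real.sin θ))
  have h := hG.hasFDerivAt.comp_hasDerivAt r hP
  refine h.congr_deriv ?_
  have hv : ((Real.cos θ, Real.sin θ) : ℝ × ℝ)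
      = Real.cos θ • ((1:ℝ), (0:ℝ)) + Real.sin θ • ((0:ℝ), (1:ℝ)) := by simp
  rw [hv, map_add, ContinuousLinearMap.map_smul, ContinuousLinearMap.map_smul]
  simp [pdx, pdy, smul_eq_mul]

lemma hasDerivAt_pol_t (r : ℝ) (θ : ℝ)
    (hG : DifferentiableAt ℝ G (r * Real.cos θ, r * Real.sin θ)) :
    HasDerivAt (fun t : ℝ => G (r * Real.cos t, r * Real.sin t))
      (-(r * Real.sin θ) * pdx G (r * Real.cos θ, r * Real.sin θ)
        + (r * Real.cos θ) * pdy G (r * Real.cos θ, r * Real.sin θ)) θ := by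
  have hP : HasDerivAt (fun t : ℝ => ((r * Real.cos t, r * Real.sin t) : ℝ × ℝ))
      (-(r * Real.sin θ), r * Real.cos θ) θ := by
    have h1 : HasDerivAt (fun t : ℝ => r * Real.cos t) (-(r * Real.sin θ)) θ := by
      simpa [mul_comm, mul_assoc, neg_mul, mul_neg] using (Real.hasDerivAt_cos θ).const_mul r
    have h2 : HasDerivAt (fun t : ℝ => r * Real.sin t) (r * Real.cos θ) θ :=
      (Real.hasDerivAt_sin θ).const_mul r
    exact h1.prodMk h2
  have h := hG.hasFDerivAt.comp_hasDerivAt θ hP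
  refine h.congr_deriv ?_
  have hv : ((-(r * Real.sin θ), r * Real.cos θ) : ℝ × ℝ)
      = (-(r * Real.sin θ)) • ((1:ℝ), (0:ℝ)) + (r * Real.cos θ) • ((0:ℝ), (1:ℝ)) := by simp
  rw [hv, map_add, ContinuousLinearMap.map_smul, ContinuousLinearMap.map_smul]
  simp [pdx, pdy, smul_eq_mul]

lemma sum_ur_vt (p : ℝ × ℝ) :
    ur α p + vt α p = p.1 * (pdx (g1 α) (pol p) + pdy (g2 α) (pol p)) := by
  unfold ur vt
  linear_combination (p.1 * (pdx (g1 α) (pol p)) + p.1 * (pdy (g2 α) (pol p))) *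
    (Real.sin_sq_add_cos_sq p.2)

end Polar

section Slice
variable {U : Set (ℝ × ℝ)} {α : ℝ × ℝ → ℝ}

lemma hasDerivAt_uu (hU : IsOpen U) (hα : ContDiffOn ℝ (⊤:ℕ∞) α U)
    (θ : ℝ) {r : ℝ} (h : pol (r, θ) ∈ U) :
    HasDerivAt (fun s => uu α (s, θ)) (ur α (r, θ)) r := by
  have hg1d : DifferentiableAt ℝ (g1 α) (r * Real.cos θ, r * Real.sin θ) :=
    diffAt_of_sm hU (contDiffOn_g1 hU hα) h
  have hg2d : DifferentiableAt ℝ (g2 α) (r * Real.cos θ, r * Real.sin θ) :=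
    diffAt_of_sm hU (contDiffOn_g2 hU hα) h
  have H1 := hasDerivAt_pol_r (G := g1 α) θ r hg1d
  have H2 := hasDerivAt_pol_r (G := g2 α) θ r hg2d
  have H := (hasDerivAt_id r).mul ((H1.const_mul (Real.cos θ)).add (H2.const_mul (Real.sin θ)))
  have hfun : (fun s => uu α (s, θ)) = fun s : ℝ =>
      s * (Real.cos θ * g1 α (s * Real.cos θ, s * Real.sin θ)
        + Real.sin θ * g2 α (s * Real.cos θ, s * Real.sin θ)) := rfl
  rw [hfun]
  refine H.congr_deriv ?_
  unfold ur pol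
  simp only [id_eq, Pi.add_apply]
  ring

lemma hasDerivAt_vv (hU : IsOpen U) (hα : ContDiffOn ℝ (⊤:ℕ∞) α U)
    (r : ℝ) {θ : ℝ} (h : pol (r, θ) ∈ U) :
    HasDerivAt (fun t => vv α (r, t)) (vt α (r, θ)) θ := by
  have hg1d : DifferentiableAt ℝ (g1 α) (r * Real.cos θ, r * Real.sin θ) :=
    diffAt_of_sm hU (contDiffOn_g1 hU hα) h
  have hg2d : DifferentiableAt ℝ (g2 α) (r * Real.cos θ, r * Real.sin θ) :=
    diffAt_of_sm hU (contDiffOn_g2 hU hα) h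
  have H1 := hasDerivAt_pol_t (G := g1 α) r θ hg1d
  have H2 := hasDerivAt_pol_t (G := g2 α) r θ hg2d
  have H := ((Real.hasDerivAt_cos θ).mul H2).sub ((Real.hasDerivAt_sin θ).mul H1)
  have hfun : (fun t => vv α (r, t)) = fun t : ℝ =>
      Real.cos t * g2 α (r * Real.cos t, r * Real.sin t)
        - Real.sin t * g1 α (r * Real.cos t, r * Real.sin t) := rfl
  rw [hfun]
  exact H.congr_deriv rfl

end Slice

section FTC
variable {U : Set (ℝ × ℝ)} {α F : ℝ × ℝ → ℝ}

lemma continuousOn_slice_r (hF : ContinuousOn F U) {θ : ℝ} {S : Set ℝ}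
    (h : ∀ s ∈ S, pol (s, θ) ∈ U) :
    ContinuousOn (fun s => F (s * Real.cos θ, s * Real.sin θ)) S := by
  have hc : Continuous fun s : ℝ => ((s * Real.cos θ, s * Real.sin θ) : ℝ × ℝ) := by fun_prop
  exact hF.comp hc.continuousOn h

lemma continuousOn_slice_t (hF : ContinuousOn F U) {r : ℝ} {S : Set ℝ}
    (h : ∀ t ∈ S, pol (r, t) ∈ U) :
    ContinuousOn (fun t => F (r * Real.cos t, r * Real.sin t)) S := by
  have hc : Continuous fun t : ℝ => ((r * Real.cos t, r * Real.sin t) : ℝ × ℝ) := by fun_prop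
  exact hF.comp hc.continuousOn h

lemma continuousOn_ur_slice (hU : IsOpen U) (hα : ContDiffOn ℝ (⊤:ℕ∞) α U)
    {θ : ℝ} {S : Set ℝ} (h : ∀ s ∈ S, pol (s, θ) ∈ U) :
    ContinuousOn (fun s => ur α (s, θ)) S := by
  have c1 := continuousOn_slice_r (contDiffOn_g1 hU hα).continuousOn h
  have c2 := continuousOn_slice_r (contDiffOn_g2 hU hα).continuousOn h
  have c3 := continuousOn_slice_r (contDiffOn_pdx hU (contDiffOn_g1 hU hα)).continuousOn h
  have c4 := continuousOn_slice_r (contDiffOn_pdy hU (contDiffOn_g1 hU hα)).continuousOn h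
  have c5 := continuousOn_slice_r (contDiffOn_pdx hU (contDiffOn_g2 hU hα)).continuousOn h
  have c6 := continuousOn_slice_r (contDiffOn_pdy hU (contDiffOn_g2 hU hα)).continuousOn h
  unfold ur pol
  simp only [Prod.fst, Prod.snd]
  fun_prop

lemma continuousOn_vt_slice (hU : IsOpen U) (hα : ContDiffOn ℝ (⊤:ℕ∞) α U)
    {r : ℝ} {S : Set ℝ} (h : ∀ t ∈ S, pol (r, t) ∈ U) :
    ContinuousOn (fun t => vt α (r, t)) S := by
  have c1 := continuousOn_slice_t (contDiffOn_g1 hU hα).continuousOn h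
  have c2 := continuousOn_slice_t (contDiffOn_g2 hU hα).continuousOn h
  have c3 := continuousOn_slice_t (contDiffOn_pdx hU (contDiffOn_g1 hU hα)).continuousOn h
  have c4 := continuousOn_slice_t (contDiffOn_pdy hU (contDiffOn_g1 hU hα)).continuousOn h
  have c5 := continuousOn_slice_t (contDiffOn_pdx hU (contDiffOn_g2 hU hα)).continuousOn h
  have c6 := continuousOn_slice_t (contDiffOn_pdy hU (contDiffOn_g2 hU hα)).continuousOn h
  unfold vt pol
  simp only [Prod.fst, Prod.snd]
  fun_prop

lemma integral_vt (hU : IsOpen U) (hα : ContDiffOn ℝ (⊤:ℕ∞) α U)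
    {r : ℝ} (hpol : ∀ t : ℝ, pol (r, t) ∈ U) :
    ∫ t in (-π)..π, vt α (r, t) = 0 := by
  have hderiv : ∀ t ∈ Set.uIcc (-π) π, HasDerivAt (fun t => vv α (r, t)) (vt α (r, t)) t :=
    fun t _ => hasDerivAt_vv hU hα r (hpol t)
  have hcont : ContinuousOn (fun t => vt α (r, t)) (Set.uIcc (-π) π) :=
    continuousOn_vt_slice hU hα (fun t _ => hpol t)
  rw [intervalIntegral.integral_eq_sub_of_hasDerivAt hderiv (hcont.intervalIntegrable)]
  show vv α (r, π) - vv α (r, -π) = 0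
  simp [vv, pol]

lemma integral_ur (hU : IsOpen U) (hα : ContDiffOn ℝ (⊤:ℕ∞) α U)
    {R θ : ℝ} (hpol : ∀ s ∈ Set.uIcc (0:ℝ) R, pol (s, θ) ∈ U) :
    ∫ s in (0:ℝ)..R, ur α (s, θ) = uu α (R, θ) := by
  have hderiv : ∀ s ∈ Set.uIcc (0:ℝ) R, HasDerivAt (fun s => uu α (s, θ)) (ur α (s, θ)) s :=
    fun s hs => hasDerivAt_uu hU hα θ (hpol s hs)
  have hcont : ContinuousOn (fun s => ur α (s, θ)) (Set.uIcc (0:ℝ) R) :=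
    continuousOn_ur_slice hU hα hpol
  rw [intervalIntegral.integral_eq_sub_of_hasDerivAt hderiv (hcont.intervalIntegrable)]
  have h0 : uu α (0, θ) = 0 := by simp [uu]
  rw [h0, sub_zero]

end FTC

section Boundary
variable {U : Set (ℝ × ℝ)} {α : ℝ × ℝ → ℝ}

lemma boundary_algebra (R c s a b A B C : ℝ) (hR : R ≠ 0) (hs : s^2 + c^2 = 1)
    (h1 : R*c*a + R*s*b = 0)
    (hW : (-(R*s)*a + (R*c)*(-(R*s)*A + (R*c)*C)) + ((R*c)*b + (R*s)*(-(R*s)*C + (R*c)*B)) = 0) :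
    R * (c*(a*B - b*C) + s*(b*A - a*C)) = (1/R^2) * (-(R*s)*a + R*c*b)^2 := by
  have ea : R * a = -s * (-(R*s)*a + R*c*b) := by linear_combination c*h1 - R*a*hs
  have eb : R * b = c * (-(R*s)*a + R*c*b) := by linear_combination s*h1 - R*b*hs
  have hW'' : (-(R*s)*a + R*c*b) + R^2*(c*s*(B-A) + (c^2-s^2)*C) = 0 := by
    linear_combination hW
  have key : R^2 * (R * (c*(a*B - b*C) + s*(b*A - a*C))) = (-(R*s)*a + R*c*b)^2 := by
    linear_combination (R^2*(c*B - s*C)) * ea + (R^2*(s*A - c*C)) * eb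
      + (-(-(R*s)*a + R*c*b)) * hW''
  rw [div_mul_eq_mul_div, one_mul, eq_div_iff (pow_ne_zero 2 hR)]
  linear_combination key

lemma boundary_value (hU : IsOpen U) (hα : ContDiffOn ℝ (⊤:ℕ∞) α U)
    (R θ : ℝ) (hR : R ≠ 0)
    (hq : ∀ t : ℝ, ((R * Real.cos t, R * Real.sin t) : ℝ × ℝ) ∈ U)
    (hnorm : ∀ t : ℝ, (R * Real.cos t) * pdx α (R * Real.cos t, R * Real.sin t)
        + (R * Real.sin t) * pdy α (R * Real.cos t, R * Real.sin t) = 0) :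
    R * (Real.cos θ * g1 α (R * Real.cos θ, R * Real.sin θ)
        + Real.sin θ * g2 α (R * Real.cos θ, R * Real.sin θ))
      = (1/R^2) * (deriv (fun t => α (R * Real.cos t, R * Real.sin t)) θ)^2 := by
  have da : DifferentiableAt ℝ α (R * Real.cos θ, R * Real.sin θ) :=
    diffAt_of_sm hU hα (hq θ)
  have dpx : DifferentiableAt ℝ (pdx α) (R * Real.cos θ, R * Real.sin θ) :=
    diffAt_of_sm hU (contDiffOn_pdx hU hα) (hq θ)
  have dpy : DifferentiableAt ℝ (pdy α) (R * Real.cos θ, R * Real.sin θ) :=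
    diffAt_of_sm hU (contDiffOn_pdy hU hα) (hq θ)
  have ht := (hasDerivAt_pol_t (G := α) R θ da).deriv
  have hx' : HasDerivAt (fun t : ℝ => R * Real.cos t) (-(R * Real.sin θ)) θ := by
    simpa [mul_comm, mul_assoc, neg_mul, mul_neg] using (Real.hasDerivAt_cos θ).const_mul R
  have hy' : HasDerivAt (fun t : ℝ => R * Real.sin t) (R * Real.cos θ) θ :=
    (Real.hasDerivAt_sin θ).const_mul R
  have hwd := (hx'.mul (hasDerivAt_pol_t (G := pdx α) R θ dpx)).add
    (hy'.mul (hasDerivAt_pol_t (G := pdy α) R θ dpy))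
  have hweq : (fun t => (R * Real.cos t) * pdx α (R * Real.cos t, R * Real.sin t)
      + (R * Real.sin t) * pdy α (R * Real.cos t, R * Real.sin t)) = fun _ => (0:ℝ) :=
    funext fun t => hnorm t
  rw [show (((fun t => R * Real.cos t) * fun t => pdx α (R * Real.cos t, R * Real.sin t)) +
      (fun t => R * Real.sin t) * fun t => pdy α (R * Real.cos t, R * Real.sin t))
      = fun _ => (0:ℝ) from hweq] at hwd
  have hW0 := hwd.unique (hasDerivAt_const θ 0)
  have hC : pdx (pdy α) (R * Real.cos θ, R * Real.sin θ)
      = pdy (pdx α) (R * Real.cos θ, R * Real.sin θ) := pdx_pdy_comm hU hα (hq θ)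
  rw [hC] at hW0
  rw [ht]
  unfold g1 g2
  rw [hC]
  exact boundary_algebra R (Real.cos θ) (Real.sin θ)
    (pdx α (R * Real.cos θ, R * Real.sin θ)) (pdy α (R * Real.cos θ, R * Real.sin θ))
    (pdx (pdx α) (R * Real.cos θ, R * Real.sin θ))
    (pdy (pdy α) (R * Real.cos θ, R * Real.sin θ))
    (pdy (pdx α) (R * Real.cos θ, R * Real.sin θ))
    hR (Real.sin_sq_add_cos_sq θ) (hnorm θ) (by linear_combination hW0)

end Boundary

lemma setIntegral_prod' {f : ℝ × ℝ → ℝ} {s t : Set ℝ}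
    (hf : IntegrableOn f (s ×ˢ t)) :
    ∫ z in s ×ˢ t, f z = ∫ x in s, ∫ y in t, f (x, y) := by
  rw [Measure.volume_eq_prod, ← Measure.prod_restrict]
  apply integral_prod
  rwa [Measure.prod_restrict, ← Measure.volume_eq_prod]

lemma setIntegral_prod_symm' {f : ℝ × ℝ → ℝ} {s t : Set ℝ}
    (hf : IntegrableOn f (s ×ˢ t)) :
    ∫ z in s ×ˢ t, f z = ∫ y in t, ∫ x in s, f (x, y) := by
  rw [Measure.volume_eq_prod, ← Measure.prod_restrict]
  apply integral_prod_symm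
  rwa [Measure.prod_restrict, ← Measure.volume_eq_prod]

/-- For `α` smooth on a neighborhood of the closed disk of radius `R` whose radial derivative
vanishes on the boundary circle,
`∫_{D_R} [(Δα)² − ‖Hess α‖²_F] dA = (1/R²) ∮_{|x|=R} (∂_θ α)² dθ`. -/
theorem disk_hamiltonian_integral_eq_boundary_integral
    (R : ℝ) (hR : 0 < R) (α : ℝ × ℝ → ℝ)
    (U : Set (ℝ × ℝ)) (hU : IsOpen U)
    (hDU : {x : ℝ × ℝ | x.1 ^ 2 + x.2 ^ 2 ≤ R ^ 2} ⊆ U)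
    (hα : ContDiffOn ℝ (⊤ : ℕ∞) α U)
    (hnormal : ∀ x : ℝ × ℝ, x.1 ^ 2 + x.2 ^ 2 = R ^ 2 →
      x.1 * pdx α x + x.2 * pdy α x = 0) :
    ∫ x in {x : ℝ × ℝ | x.1 ^ 2 + x.2 ^ 2 ≤ R ^ 2},
        ((pdx (pdx α) x + pdy (pdy α) x) ^ 2 -
          ((pdx (pdx α) x) ^ 2 + (pdx (pdy α) x) ^ 2 +
            (pdy (pdx α) x) ^ 2 + (pdy (pdy α) x) ^ 2))
      = (1 / R ^ 2) *
          ∫ θ in (0 : ℝ)..(2 * π),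
            (deriv (fun t => α (R * Real.cos t, R * Real.sin t)) θ) ^ 2 := by
  have hα' : ContDiffOn ℝ (⊤:ℕ∞) α U := hα.of_le (by simp)
  set D : Set (ℝ × ℝ) := {x : ℝ × ℝ | x.1 ^ 2 + x.2 ^ 2 ≤ R ^ 2} with hDdef
  have hDclosed : IsClosed D := isClosed_le (by fun_prop) continuous_const
  have hmeasD := hDclosed.measurableSet
  have hpolD : ∀ p : ℝ × ℝ, 0 ≤ p.1 → p.1 ≤ R → pol p ∈ D := by
    intro p h0 h1
    simp only [hDdef, Set.mem_setOf_eq, pol]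
    have hsq : (p.1 * Real.cos p.2) ^ 2 + (p.1 * Real.sin p.2) ^ 2 = p.1 ^ 2 := by
      linear_combination p.1 ^ 2 * (Real.sin_sq_add_cos_sq p.2)
    nlinarith [hsq]
  have hcirc : ∀ t : ℝ, ((R * Real.cos t, R * Real.sin t) : ℝ × ℝ) ∈ D := by
    intro t
    simp only [hDdef, Set.mem_setOf_eq]
    have := Real.sin_sq_add_cos_sq t
    nlinarith
  -- Step 1 : replace integrand by divergence
  rw [setIntegral_congr_fun hmeasD (fun x hx => divergence_identity hU hα' (hDU hx))]
  -- Step 2 : polar coordinates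
  have hpolC : Continuous pol := by unfold pol; fun_prop
  have hmeasPre : MeasurableSet (pol ⁻¹' D) := (hDclosed.preimage hpolC).measurableSet
  have hπ : (0:ℝ) < π := Real.pi_pos
  have h2 : (∫ x in D, (pdx (g1 α) x + pdy (g2 α) x))
      = ∫ p in Set.Ioc 0 R ×ˢ Set.Ioo (-π) π,
          p.1 * (pdx (g1 α) (pol p) + pdy (g2 α) (pol p)) := by
    rw [← integral_indicator hmeasD,
      ← integral_comp_polarCoord_symm (D.indicator (fun x => pdx (g1 α) x + pdy (g2 α) x))]
    have hpt : ∀ p : ℝ × ℝ,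
        p.1 • D.indicator (fun x => pdx (g1 α) x + pdy (g2 α) x) (polarCoord.symm p)
        = (pol ⁻¹' D).indicator
            (fun p => p.1 * (pdx (g1 α) (pol p) + pdy (g2 α) (pol p))) p := by
      intro p
      have hsymm : polarCoord.symm p = pol p := rfl
      by_cases hp : pol p ∈ D
      · simp [Set.indicator_of_mem, hp, hsymm, Set.mem_preimage, smul_eq_mul]
      · simp [Set.indicator_of_notMem, hp, hsymm, Set.mem_preimage, smul_eq_mul]
    simp_rw [hpt]
    rw [setIntegral_indicator hmeasPre]
    have hsets : polarCoord.target ∩ pol ⁻¹' D = Set.Ioc 0 R ×ˢ Set.Ioo (-π) π := by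
      rw [polarCoord_target]
      ext ⟨r, t⟩
      simp only [Set.mem_inter_iff, Set.mem_prod, Set.mem_Ioi, Set.mem_Ioo, Set.mem_preimage,
        Set.mem_Ioc, hDdef, Set.mem_setOf_eq, pol]
      have hsq : ∀ r : ℝ, (r * Real.cos t) ^ 2 + (r * Real.sin t) ^ 2 = r ^ 2 := by
        intro r
        linear_combination r ^ 2 * (Real.sin_sq_add_cos_sq t)
      constructor
      · rintro ⟨⟨h0, ht⟩, hd⟩
        rw [hsq r] at hd
        exact ⟨⟨h0, by nlinarith⟩, ht⟩
      · rintro ⟨⟨h0, h1⟩, ht⟩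
        refine ⟨⟨h0, ht⟩, ?_⟩
        rw [hsq r]
        nlinarith
    rw [hsets]
  rw [h2]
  -- integrability
  have hKcomp : IsCompact (Set.Icc (0:ℝ) R ×ˢ Set.Icc (-π) π) := isCompact_Icc.prod isCompact_Icc
  have hKmaps : ∀ p ∈ Set.Icc (0:ℝ) R ×ˢ Set.Icc (-π) π, pol p ∈ U :=
    fun p hp => hDU (hpolD p hp.1.1 hp.1.2)
  have hcomp : ∀ {F : ℝ × ℝ → ℝ}, ContinuousOn F U →
      ContinuousOn (fun p => F (pol p)) (Set.Icc (0:ℝ) R ×ˢ Set.Icc (-π) π) :=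
    fun hF => hF.comp hpolC.continuousOn hKmaps
  have c1 := hcomp (contDiffOn_g1 hU hα').continuousOn
  have c2 := hcomp (contDiffOn_g2 hU hα').continuousOn
  have c3 := hcomp (contDiffOn_pdx hU (contDiffOn_g1 hU hα')).continuousOn
  have c4 := hcomp (contDiffOn_pdy hU (contDiffOn_g1 hU hα')).continuousOn
  have c5 := hcomp (contDiffOn_pdx hU (contDiffOn_g2 hU hα')).continuousOn
  have c6 := hcomp (contDiffOn_pdy hU (contDiffOn_g2 hU hα')).continuousOn
  have hEsubK : (Set.Ioc (0:ℝ) R ×ˢ Set.Ioo (-π) π) ⊆ Set.Icc (0:ℝ) R ×ˢ Set.Icc (-π) π :=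
    Set.prod_mono Set.Ioc_subset_Icc_self Set.Ioo_subset_Icc_self
  have hIntDiv : IntegrableOn (fun p => p.1 * (pdx (g1 α) (pol p) + pdy (g2 α) (pol p)))
      (Set.Ioc (0:ℝ) R ×ˢ Set.Ioo (-π) π) := by
    refine (ContinuousOn.integrableOn_compact hKcomp ?_).mono_set hEsubK
    exact continuous_fst.continuousOn.mul (c3.add c6)
  have hContUr : ContinuousOn (ur α) (Set.Icc (0:ℝ) R ×ˢ Set.Icc (-π) π) := by
    unfold ur; fun_prop
  have hContVt : ContinuousOn (vt α) (Set.Icc (0:ℝ) R ×ˢ Set.Icc (-π) π) := by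
    unfold vt; fun_prop
  have hIntUr : IntegrableOn (ur α) (Set.Ioc (0:ℝ) R ×ˢ Set.Ioo (-π) π) :=
    (hContUr.integrableOn_compact hKcomp).mono_set hEsubK
  have hIntVt : IntegrableOn (vt α) (Set.Ioc (0:ℝ) R ×ˢ Set.Ioo (-π) π) :=
    (hContVt.integrableOn_compact hKcomp).mono_set hEsubK
  have hmeasE : MeasurableSet (Set.Ioc (0:ℝ) R ×ˢ Set.Ioo (-π) π) :=
    measurableSet_Ioc.prod measurableSet_Ioo
  rw [setIntegral_congr_fun hmeasE
    (fun p _ => ((sum_ur_vt (α := α) p).symm :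
      p.1 * (pdx (g1 α) (pol p) + pdy (g2 α) (pol p)) = ur α p + vt α p)),
    integral_add hIntUr hIntVt]
  -- the vt term vanishes
  have hvt0 : (∫ p in Set.Ioc (0:ℝ) R ×ˢ Set.Ioo (-π) π, vt α p) = 0 := by
    rw [setIntegral_prod' hIntVt]
    have hz : Set.EqOn (fun r : ℝ => ∫ t in Set.Ioo (-π) π, vt α (r, t)) (fun _ => (0:ℝ))
        (Set.Ioc 0 R) := by
      intro r hr
      dsimp only
      have hpol : ∀ t : ℝ, pol (r, t) ∈ U := fun t => hDU (hpolD (r, t) hr.1.le hr.2)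
      have h0 := integral_vt hU hα' hpol
      rw [intervalIntegral.integral_of_le (by linarith : -π ≤ π),
        integral_Ioc_eq_integral_Ioo] at h0
      exact h0
    rw [setIntegral_congr_fun measurableSet_Ioc hz]
    simp
  rw [hvt0, add_zero]
  -- the ur term
  have hnorm' : ∀ t : ℝ, (R * Real.cos t) * pdx α (R * Real.cos t, R * Real.sin t)
      + (R * Real.sin t) * pdy α (R * Real.cos t, R * Real.sin t) = 0 := by
    intro t
    exact hnormal (R * Real.cos t, R * Real.sin t)
      (show (R * Real.cos t)^2 + (R * Real.sin t)^2 = R^2 by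
        linear_combination R^2 * (Real.sin_sq_add_cos_sq t))
  have hbd : ∀ t : ℝ, uu α (R, t)
      = (1/R^2) * (deriv (fun s => α (R * Real.cos s, R * Real.sin s)) t)^2 := by
    intro t
    have hb := boundary_value hU hα' R t hR.ne' (fun s => hDU (hcirc s)) hnorm'
    exact hb
  have hur : (∫ p in Set.Ioc (0:ℝ) R ×ˢ Set.Ioo (-π) π, ur α p)
      = ∫ t in Set.Ioo (-π) π,
          (1/R^2) * (deriv (fun s => α (R * Real.cos s, R * Real.sin s)) t)^2 := by
    rw [setIntegral_prod_symm' hIntUr]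
    apply setIntegral_congr_fun measurableSet_Ioo
    intro t ht
    dsimp only
    have hpol : ∀ s ∈ Set.uIcc (0:ℝ) R, pol (s, t) ∈ U := by
      intro s hs
      rw [Set.uIcc_of_le hR.le] at hs
      exact hDU (hpolD (s, t) hs.1 hs.2)
    rw [← intervalIntegral.integral_of_le hR.le, integral_ur hU hα' hpol]
    exact hbd t
  rw [hur]
  -- periodicity
  have hperf : Function.Periodic (fun t => α (R * Real.cos t, R * Real.sin t)) (2 * π) := by
    intro t; simp [Real.cos_add_two_pi, Real.sin_add_two_pi]
  have hperd : Function.Periodic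
      (deriv (fun t => α (R * Real.cos t, R * Real.sin t))) (2 * π) := by
    intro t
    have hfun : (fun x => (fun t => α (R * Real.cos t, R * Real.sin t)) (x + 2 * π))
        = fun t => α (R * Real.cos t, R * Real.sin t) := funext fun x => hperf x
    rw [← deriv_comp_add_const, hfun]
  have hper2 : Function.Periodic
      (fun t => (deriv (fun t => α (R * Real.cos t, R * Real.sin t)) t)^2) (2 * π) :=
    hperd.comp (fun x => x^2)
  rw [← integral_Ioc_eq_integral_Ioo, ← intervalIntegral.integral_of_le (by linarith : -π ≤ π),
    intervalIntegral.integral_const_mul]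
  have hshift := hper2.intervalIntegral_add_eq (-π) 0
  rw [zero_add, (by ring : -π + 2 * π = π)] at hshift
  rw [hshift]
end

section
/- Let R > 0 and let α be a smooth real-valued function on an open neighborhood of the closed disk D_R = {x ∈ ℝ² : |x| ≤ R} such that (i) α satisfies the homogeneous real Monge–Ampère equation (∂_x∂_y α)² − (∂_x² α)(∂_y² α) = 0 everywhere on D_R, and (ii) the normal (radial) derivative of α vanishes at every point of the boundary circle |x| = R. Then the tangential (angular) derivative of α also vanishes at every point of the boundary circle; equivalently, α is constant on the circle |x| = R. Hence there is no adiabatic solution with nontrivial exact boundary data on a round two-dimensional boundary. -/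
open Real

private lemma clm_pair_decomp (L : (ℝ × ℝ) →L[ℝ] ℝ) (v : ℝ × ℝ) :
    L v = v.1 * L (1, 0) + v.2 * L (0, 1) := by
  have hv : v = v.1 • ((1:ℝ), (0:ℝ)) + v.2 • ((0:ℝ), (1:ℝ)) := by
    ext <;> simp
  conv_lhs => rw [hv, map_add, map_smul, map_smul]
  simp [smul_eq_mul]

private lemma pd_hasFDerivAt {α : ℝ × ℝ → ℝ} {U : Set (ℝ × ℝ)} (hU : IsOpen U)
    (hα : ContDiffOn ℝ (⊤ : ℕ∞) α U) {x : ℝ × ℝ} (hx : x ∈ U) (v : ℝ × ℝ) :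
    HasFDerivAt (fun y => fderiv ℝ α y v) ((fderiv ℝ (fderiv ℝ α) x).flip v) x := by
  have h1 : ContDiffAt ℝ (⊤ : ℕ∞) α x := hα.contDiffAt (hU.mem_nhds hx)
  have h2 : ContDiffAt ℝ 1 (fderiv ℝ α) x := h1.fderiv_right (by exact WithTop.coe_le_coe.2 le_top)
  have h3 : HasFDerivAt (fderiv ℝ α) (fderiv ℝ (fderiv ℝ α) x) x :=
    (h2.differentiableAt one_ne_zero).hasFDerivAt
  simpa using h3.clm_apply (hasFDerivAt_const v x)

private lemma snd_symm {α : ℝ × ℝ → ℝ} {U : Set (ℝ × ℝ)} (hU : IsOpen U)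
    (hα : ContDiffOn ℝ (⊤ : ℕ∞) α U) {x : ℝ × ℝ} (hx : x ∈ U) (v w : ℝ × ℝ) :
    fderiv ℝ (fderiv ℝ α) x v w = fderiv ℝ (fderiv ℝ α) x w v := by
  have h1 : ContDiffAt ℝ (⊤ : ℕ∞) α x := hα.contDiffAt (hU.mem_nhds hx)
  have h2 : ContDiffAt ℝ 1 (fderiv ℝ α) x := h1.fderiv_right (by exact WithTop.coe_le_coe.2 le_top)
  have h3 : HasFDerivAt (fderiv ℝ α) (fderiv ℝ (fderiv ℝ α) x) x :=
    (h2.differentiableAt one_ne_zero).hasFDerivAt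
  have hf : ∀ᶠ y in nhds x, HasFDerivAt α (fderiv ℝ α y) y := by
    filter_upwards [hU.mem_nhds hx] with y hy
    exact ((hα.contDiffAt (hU.mem_nhds hy)).differentiableAt (by simp)).hasFDerivAt
  exact second_derivative_symmetric_of_eventually hf h3 v w


section Work

variable {R : ℝ} (hR : 0 < R) {α : ℝ × ℝ → ℝ}
    {U : Set (ℝ × ℝ)} (hU : IsOpen U)
    (hDU : {x : ℝ × ℝ | x.1 ^ 2 + x.2 ^ 2 ≤ R ^ 2} ⊆ U)
    (hα : ContDiffOn ℝ (⊤ : ℕ∞) α U)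

private lemma hsq_lem (θ : ℝ) : (R * Real.cos θ) ^ 2 + (R * Real.sin θ) ^ 2 = R ^ 2 := by
  linear_combination R ^ 2 * Real.sin_sq_add_cos_sq θ

include hDU in
private lemma hmem_lem (θ : ℝ) : ((R * Real.cos θ, R * Real.sin θ) : ℝ × ℝ) ∈ U :=
  hDU (by simpa using (hsq_lem θ).le)

include hU hDU hα in
private lemma hP_lem (θ : ℝ) :
    HasDerivAt (fun θ : ℝ => pdx α (R * Real.cos θ, R * Real.sin θ))
      (-(R * Real.sin θ) * pdx (pdx α) (R * Real.cos θ, R * Real.sin θ)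
        + R * Real.cos θ * pdx (pdy α) (R * Real.cos θ, R * Real.sin θ)) θ := by
  have hc : HasDerivAt (fun θ : ℝ => ((R * Real.cos θ, R * Real.sin θ) : ℝ × ℝ))
      (-(R * Real.sin θ), R * Real.cos θ) θ := by
    have h1 := (Real.hasDerivAt_cos θ).const_mul R
    have h2 := (Real.hasDerivAt_sin θ).const_mul R
    simpa [mul_neg] using h1.prodMk h2
  have hmem := hmem_lem hDU (R := R) θ
  have hfd := pd_hasFDerivAt hU hα hmem ((1:ℝ), (0:ℝ))
  have h := hfd.comp_hasDerivAt θ hc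
  have ha : pdx (pdx α) (R * Real.cos θ, R * Real.sin θ)
      = fderiv ℝ (fderiv ℝ α) ((R * Real.cos θ, R * Real.sin θ) : ℝ × ℝ) (1, 0) (1, 0) := by
    show fderiv ℝ (fun y => fderiv ℝ α y (1, 0)) _ (1, 0) = _
    rw [hfd.fderiv]; rfl
  have hb : pdx (pdy α) (R * Real.cos θ, R * Real.sin θ)
      = fderiv ℝ (fderiv ℝ α) ((R * Real.cos θ, R * Real.sin θ) : ℝ × ℝ) (1, 0) (0, 1) := by
    show fderiv ℝ (fun y => fderiv ℝ α y (0, 1)) _ (1, 0) = _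
    rw [(pd_hasFDerivAt hU hα hmem ((0:ℝ), (1:ℝ))).fderiv]; rfl
  have hval : (fderiv ℝ (fderiv ℝ α) ((R * Real.cos θ, R * Real.sin θ) : ℝ × ℝ)).flip (1, 0)
      (-(R * Real.sin θ), R * Real.cos θ)
      = -(R * Real.sin θ) * pdx (pdx α) (R * Real.cos θ, R * Real.sin θ)
        + R * Real.cos θ * pdx (pdy α) (R * Real.cos θ, R * Real.sin θ) := by
    rw [clm_pair_decomp]
    have hflip1 : ((fderiv ℝ (fderiv ℝ α) ((R * Real.cos θ, R * Real.sin θ) : ℝ × ℝ)).flip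
        ((1:ℝ), (0:ℝ))) ((1:ℝ), (0:ℝ))
        = fderiv ℝ (fderiv ℝ α) ((R * Real.cos θ, R * Real.sin θ) : ℝ × ℝ) (1, 0) (1, 0) := rfl
    have hflip2 : ((fderiv ℝ (fderiv ℝ α) ((R * Real.cos θ, R * Real.sin θ) : ℝ × ℝ)).flip
        ((1:ℝ), (0:ℝ))) ((0:ℝ), (1:ℝ))
        = fderiv ℝ (fderiv ℝ α) ((R * Real.cos θ, R * Real.sin θ) : ℝ × ℝ) (0, 1) (1, 0) := rfl
    rw [hflip1, hflip2, snd_symm hU hα hmem ((0:ℝ),(1:ℝ)) ((1:ℝ),(0:ℝ)), ← ha, ← hb]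
  rw [hval] at h
  exact h

include hU hDU hα in
private lemma hQ_lem (θ : ℝ) :
    HasDerivAt (fun θ : ℝ => pdy α (R * Real.cos θ, R * Real.sin θ))
      (-(R * Real.sin θ) * pdx (pdy α) (R * Real.cos θ, R * Real.sin θ)
        + R * Real.cos θ * pdy (pdy α) (R * Real.cos θ, R * Real.sin θ)) θ := by
  have hc : HasDerivAt (fun θ : ℝ => ((R * Real.cos θ, R * Real.sin θ) : ℝ × ℝ))
      (-(R * Real.sin θ), R * Real.cos θ) θ := by
    have h1 := (Real.hasDerivAt_cos θ).const_mul R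
    have h2 := (Real.hasDerivAt_sin θ).const_mul R
    simpa [mul_neg] using h1.prodMk h2
  have hmem := hmem_lem hDU (R := R) θ
  have hfd := pd_hasFDerivAt hU hα hmem ((0:ℝ), (1:ℝ))
  have h := hfd.comp_hasDerivAt θ hc
  have hb : pdx (pdy α) (R * Real.cos θ, R * Real.sin θ)
      = fderiv ℝ (fderiv ℝ α) ((R * Real.cos θ, R * Real.sin θ) : ℝ × ℝ) (1, 0) (0, 1) := by
    show fderiv ℝ (fun y => fderiv ℝ α y (0, 1)) _ (1, 0) = _
    rw [hfd.fderiv]; rfl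
  have hd : pdy (pdy α) (R * Real.cos θ, R * Real.sin θ)
      = fderiv ℝ (fderiv ℝ α) ((R * Real.cos θ, R * Real.sin θ) : ℝ × ℝ) (0, 1) (0, 1) := by
    show fderiv ℝ (fun y => fderiv ℝ α y (0, 1)) _ (0, 1) = _
    rw [hfd.fderiv]; rfl
  have hval : (fderiv ℝ (fderiv ℝ α) ((R * Real.cos θ, R * Real.sin θ) : ℝ × ℝ)).flip (0, 1)
      (-(R * Real.sin θ), R * Real.cos θ)
      = -(R * Real.sin θ) * pdx (pdy α) (R * Real.cos θ, R * Real.sin θ)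
        + R * Real.cos θ * pdy (pdy α) (R * Real.cos θ, R * Real.sin θ) := by
    rw [clm_pair_decomp]
    rw [show ((fderiv ℝ (fderiv ℝ α) ((R * Real.cos θ, R * Real.sin θ) : ℝ × ℝ)).flip
        ((0:ℝ), (1:ℝ))) ((1:ℝ), (0:ℝ))
        = fderiv ℝ (fderiv ℝ α) ((R * Real.cos θ, R * Real.sin θ) : ℝ × ℝ) (1, 0) (0, 1) from rfl]
    rw [show ((fderiv ℝ (fderiv ℝ α) ((R * Real.cos θ, R * Real.sin θ) : ℝ × ℝ)).flip
        ((0:ℝ), (1:ℝ))) ((0:ℝ), (1:ℝ))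
        = fderiv ℝ (fderiv ℝ α) ((R * Real.cos θ, R * Real.sin θ) : ℝ × ℝ) (0, 1) (0, 1) from rfl]
    rw [← hb, ← hd]
  rw [hval] at h
  exact h

include hU hDU hα in
private lemma Tzero
    (hrma : ∀ x : ℝ × ℝ, x.1 ^ 2 + x.2 ^ 2 ≤ R ^ 2 →
      (pdx (pdy α) x) ^ 2 - pdx (pdx α) x * pdy (pdy α) x = 0)
    (hnormal : ∀ x : ℝ × ℝ, x.1 ^ 2 + x.2 ^ 2 = R ^ 2 →
      x.1 * pdx α x + x.2 * pdy α x = 0) :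
    ∀ θ : ℝ, -(R * Real.sin θ) * pdx α (R * Real.cos θ, R * Real.sin θ)
      + R * Real.cos θ * pdy α (R * Real.cos θ, R * Real.sin θ) = 0 := by
  -- notation
  have hN : ∀ θ : ℝ, R * Real.cos θ * pdx α (R * Real.cos θ, R * Real.sin θ)
      + R * Real.sin θ * pdy α (R * Real.cos θ, R * Real.sin θ) = 0 := by
    intro θ
    exact hnormal (R * Real.cos θ, R * Real.sin θ) (by simpa using hsq_lem (R := R) θ)
  have hb2 : ∀ θ : ℝ, pdx (pdy α) (R * Real.cos θ, R * Real.sin θ) ^ 2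
      = pdx (pdx α) (R * Real.cos θ, R * Real.sin θ)
        * pdy (pdy α) (R * Real.cos θ, R * Real.sin θ) := by
    intro θ
    have := hrma (R * Real.cos θ, R * Real.sin θ) (by simpa using (hsq_lem (R := R) θ).le)
    linarith [this]
  -- derivative of the normal component is zero (it is the zero function)
  have hNder : ∀ θ : ℝ,
      R * -Real.sin θ * pdx α (R * Real.cos θ, R * Real.sin θ)
        + R * Real.cos θ * (-(R * Real.sin θ) * pdx (pdx α) (R * Real.cos θ, R * Real.sin θ)
            + R * Real.cos θ * pdx (pdy α) (R * Real.cos θ, R * Real.sin θ))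
        + (R * Real.cos θ * pdy α (R * Real.cos θ, R * Real.sin θ)
          + R * Real.sin θ * (-(R * Real.sin θ) * pdx (pdy α) (R * Real.cos θ, R * Real.sin θ)
            + R * Real.cos θ * pdy (pdy α) (R * Real.cos θ, R * Real.sin θ))) = 0 := by
    intro θ
    have h : HasDerivAt (fun θ : ℝ =>
        R * Real.cos θ * pdx α (R * Real.cos θ, R * Real.sin θ)
          + R * Real.sin θ * pdy α (R * Real.cos θ, R * Real.sin θ))
        (R * -Real.sin θ * pdx α (R * Real.cos θ, R * Real.sin θ)
          + R * Real.cos θ * (-(R * Real.sin θ) * pdx (pdx α) (R * Real.cos θ, R * Real.sin θ)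
              + R * Real.cos θ * pdx (pdy α) (R * Real.cos θ, R * Real.sin θ))
          + (R * Real.cos θ * pdy α (R * Real.cos θ, R * Real.sin θ)
            + R * Real.sin θ * (-(R * Real.sin θ) * pdx (pdy α) (R * Real.cos θ, R * Real.sin θ)
              + R * Real.cos θ * pdy (pdy α) (R * Real.cos θ, R * Real.sin θ)))) θ :=
      (((Real.hasDerivAt_cos θ).const_mul R).mul (hP_lem hU hDU hα θ)).add
        (((Real.hasDerivAt_sin θ).const_mul R).mul (hQ_lem hU hDU hα θ))
    have hfun : (fun θ : ℝ =>
        R * Real.cos θ * pdx α (R * Real.cos θ, R * Real.sin θ)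
          + R * Real.sin θ * pdy α (R * Real.cos θ, R * Real.sin θ)) = fun _ => (0:ℝ) :=
      funext hN
    rw [hfun] at h
    exact h.unique (hasDerivAt_const θ 0)
  -- the tangential component and its derivative
  have hT : ∀ θ : ℝ, HasDerivAt (fun θ : ℝ =>
      -(R * Real.sin θ) * pdx α (R * Real.cos θ, R * Real.sin θ)
        + R * Real.cos θ * pdy α (R * Real.cos θ, R * Real.sin θ))
      (R ^ 2 * (Real.sin θ ^ 2 * pdx (pdx α) (R * Real.cos θ, R * Real.sin θ)
        - 2 * (Real.sin θ * Real.cos θ) * pdx (pdy α) (R * Real.cos θ, R * Real.sin θ)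
        + Real.cos θ ^ 2 * pdy (pdy α) (R * Real.cos θ, R * Real.sin θ))) θ := by
    intro θ
    have h :=
      ((((Real.hasDerivAt_sin θ).const_mul R).neg.mul (hP_lem hU hDU hα θ)).add
        (((Real.hasDerivAt_cos θ).const_mul R).mul (hQ_lem hU hDU hα θ)))
    have hval : -(R * Real.cos θ) * pdx α (R * Real.cos θ, R * Real.sin θ)
          + -(R * Real.sin θ) * (-(R * Real.sin θ) * pdx (pdx α) (R * Real.cos θ, R * Real.sin θ)
              + R * Real.cos θ * pdx (pdy α) (R * Real.cos θ, R * Real.sin θ))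
          + (R * -Real.sin θ * pdy α (R * Real.cos θ, R * Real.sin θ)
            + R * Real.cos θ * (-(R * Real.sin θ) * pdx (pdy α) (R * Real.cos θ, R * Real.sin θ)
              + R * Real.cos θ * pdy (pdy α) (R * Real.cos θ, R * Real.sin θ)))
        = R ^ 2 * (Real.sin θ ^ 2 * pdx (pdx α) (R * Real.cos θ, R * Real.sin θ)
          - 2 * (Real.sin θ * Real.cos θ) * pdx (pdy α) (R * Real.cos θ, R * Real.sin θ)
          + Real.cos θ ^ 2 * pdy (pdy α) (R * Real.cos θ, R * Real.sin θ)) := by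
      linear_combination (-1 : ℝ) * hN θ
    simp only [Pi.neg_apply] at h
    rw [hval] at h
    exact h
  -- key pointwise identity : T² = M · T'
  have hkey : ∀ θ : ℝ,
      (-(R * Real.sin θ) * pdx α (R * Real.cos θ, R * Real.sin θ)
        + R * Real.cos θ * pdy α (R * Real.cos θ, R * Real.sin θ)) ^ 2
      = (R ^ 2 * (Real.cos θ ^ 2 * pdx (pdx α) (R * Real.cos θ, R * Real.sin θ)
          + 2 * (Real.sin θ * Real.cos θ) * pdx (pdy α) (R * Real.cos θ, R * Real.sin θ)
          + Real.sin θ ^ 2 * pdy (pdy α) (R * Real.cos θ, R * Real.sin θ)))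
        * (R ^ 2 * (Real.sin θ ^ 2 * pdx (pdx α) (R * Real.cos θ, R * Real.sin θ)
          - 2 * (Real.sin θ * Real.cos θ) * pdx (pdy α) (R * Real.cos θ, R * Real.sin θ)
          + Real.cos θ ^ 2 * pdy (pdy α) (R * Real.cos θ, R * Real.sin θ))) := by
    intro θ
    set s := Real.sin θ
    set co := Real.cos θ
    set P := pdx α (R * co, R * s)
    set Q := pdy α (R * co, R * s)
    set a := pdx (pdx α) (R * co, R * s)
    set b := pdx (pdy α) (R * co, R * s)
    set d := pdy (pdy α) (R * co, R * s)
    have hA := hNder θ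
    have hB := hb2 θ
    linear_combination
      ((-(R * s) * P + R * co * Q)
        - (R * co * (-(R * s) * a + R * co * b) + R * s * (-(R * s) * b + R * co * d))) * hA
      + (R ^ 4 * (s ^ 2 + co ^ 2) ^ 2) * hB
  -- continuity and periodicity of T
  set T : ℝ → ℝ := fun θ =>
      -(R * Real.sin θ) * pdx α (R * Real.cos θ, R * Real.sin θ)
        + R * Real.cos θ * pdy α (R * Real.cos θ, R * Real.sin θ) with hTdef
  have hTper : Function.Periodic (fun θ => T θ ^ 2) (2 * Real.pi) := by
    intro θ
    simp only [hTdef, Real.cos_add_two_pi, Real.sin_add_two_pi]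
  have hScont : Continuous fun θ => T θ ^ 2 := by
    have : ∀ θ : ℝ, HasDerivAt T _ θ := hT
    exact (continuous_iff_continuousAt.2 fun θ => ((hT θ).continuousAt)).pow 2
  obtain ⟨θ₀, hθ₀mem, hθ₀max⟩ :=
    (isCompact_Icc (a := (0:ℝ)) (b := 2 * Real.pi)).exists_isMaxOn
      (Set.nonempty_Icc.2 (by positivity)) hScont.continuousOn
  have hglob : ∀ θ : ℝ, T θ ^ 2 ≤ T θ₀ ^ 2 := by
    intro θ
    obtain ⟨y, hy, hEq⟩ := hTper.exists_mem_Ico₀ (by positivity) θ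
    rw [hEq]
    exact hθ₀max (Set.mem_Icc.2 ⟨hy.1, hy.2.le⟩)
  have hloc : IsLocalMax (fun θ => T θ ^ 2) θ₀ := Filter.Eventually.of_forall hglob
  have hderiv0 : deriv (fun θ => T θ ^ 2) θ₀ = 0 := hloc.deriv_eq_zero
  have hSder := ((hT θ₀).pow 2)
  have hprod : T θ₀ * (R ^ 2 * (Real.sin θ₀ ^ 2 * pdx (pdx α) (R * Real.cos θ₀, R * Real.sin θ₀)
        - 2 * (Real.sin θ₀ * Real.cos θ₀) * pdx (pdy α) (R * Real.cos θ₀, R * Real.sin θ₀)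
        + Real.cos θ₀ ^ 2 * pdy (pdy α) (R * Real.cos θ₀, R * Real.sin θ₀))) = 0 := by
    have := hSder.deriv
    rw [show (T ^ 2) = (fun θ => T θ ^ 2) from rfl, hderiv0] at this
    have h2 : (2 : ℝ) * T θ₀ ^ 1 * _ = 0 := this.symm
    nlinarith [this]
  have hT0 : T θ₀ = 0 := by
    rcases mul_eq_zero.1 hprod with h | h
    · exact h
    · have := hkey θ₀
      rw [h, mul_zero] at this
      exact (pow_eq_zero_iff two_ne_zero).1 this
  intro θ
  have h1 : T θ ^ 2 ≤ 0 := by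
    have := hglob θ
    rw [hT0] at this
    simpa using this
  have h2 : T θ ^ 2 = 0 := le_antisymm h1 (sq_nonneg _)
  exact (pow_eq_zero_iff two_ne_zero).1 h2

end Work

/-- If `α` is smooth on a neighborhood of the closed disk of radius `R`, satisfies the
homogeneous real Monge–Ampère equation `(∂ₓ∂ᵧα)² − (∂ₓ²α)(∂ᵧ²α) = 0` on the disk, and its
radial derivative vanishes on the boundary circle, then its tangential derivative also
vanishes on the boundary circle; equivalently, `α` is constant on the circle. -/
theorem hrma_disk_no_nontrivial_boundary_data
    (R : ℝ) (hR : 0 < R) (α : ℝ × ℝ → ℝ)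
    (U : Set (ℝ × ℝ)) (hU : IsOpen U)
    (hDU : {x : ℝ × ℝ | x.1 ^ 2 + x.2 ^ 2 ≤ R ^ 2} ⊆ U)
    (hα : ContDiffOn ℝ (⊤ : ℕ∞) α U)
    (hrma : ∀ x : ℝ × ℝ, x.1 ^ 2 + x.2 ^ 2 ≤ R ^ 2 →
      (pdx (pdy α) x) ^ 2 - pdx (pdx α) x * pdy (pdy α) x = 0)
    (hnormal : ∀ x : ℝ × ℝ, x.1 ^ 2 + x.2 ^ 2 = R ^ 2 →
      x.1 * pdx α x + x.2 * pdy α x = 0) :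
    (∀ x : ℝ × ℝ, x.1 ^ 2 + x.2 ^ 2 = R ^ 2 →
      -x.2 * pdx α x + x.1 * pdy α x = 0) ∧
    (∀ x y : ℝ × ℝ, x.1 ^ 2 + x.2 ^ 2 = R ^ 2 → y.1 ^ 2 + y.2 ^ 2 = R ^ 2 →
      α x = α y) := by
  have hTz := Tzero hU hDU hα hrma hnormal
  -- every boundary point is on the parametrized circle
  have hparam : ∀ x : ℝ × ℝ, x.1 ^ 2 + x.2 ^ 2 = R ^ 2 →
      ∃ θ : ℝ, ((R * Real.cos θ, R * Real.sin θ) : ℝ × ℝ) = x := by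
    intro x hx
    set z : ℂ := ⟨x.1, x.2⟩ with hz
    have habs2 : ‖z‖ ^ 2 = R ^ 2 := by
      rw [Complex.sq_norm]
      simpa [hz, Complex.normSq_mk, sq] using hx
    have habs : ‖z‖ = R := by
      have hfac : (‖z‖ - R) * (‖z‖ + R) = 0 := by ring_nf; nlinarith [habs2]
      rcases mul_eq_zero.1 hfac with h | h
      · linarith
      · have := norm_nonneg z; linarith
    have hz0 : z ≠ 0 := by
      intro h
      rw [h] at habs
      simp at habs
      exact hR.ne habs
    refine ⟨Complex.arg z, ?_⟩
    have hc := Complex.cos_arg hz0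
    have hs := Complex.sin_arg z
    rw [habs] at hc hs
    have hre : z.re = x.1 := rfl
    have him : z.im = x.2 := rfl
    rw [hre] at hc; rw [him] at hs
    have hR' : R ≠ 0 := ne_of_gt hR
    ext
    · show R * Real.cos (Complex.arg z) = x.1
      rw [hc]; field_simp
    · show R * Real.sin (Complex.arg z) = x.2
      rw [hs]; field_simp
  constructor
  · intro x hx
    obtain ⟨θ, hθ⟩ := hparam x hx
    have := hTz θ
    rw [hθ] at this
    have h1 : R * Real.sin θ = x.2 := congrArg Prod.snd hθ
    have h2 : R * Real.cos θ = x.1 := congrArg Prod.fst hθ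
    rw [h1, h2] at this
    exact this
  · intro x y hx hy
    obtain ⟨θx, hθx⟩ := hparam x hx
    obtain ⟨θy, hθy⟩ := hparam y hy
    -- α along the circle is constant since its derivative is the tangential derivative = 0
    have hu : ∀ θ : ℝ, HasDerivAt (fun θ : ℝ => α (R * Real.cos θ, R * Real.sin θ)) 0 θ := by
      intro θ
      have hc : HasDerivAt (fun θ : ℝ => ((R * Real.cos θ, R * Real.sin θ) : ℝ × ℝ))
          (-(R * Real.sin θ), R * Real.cos θ) θ := by
        have h1 := (Real.hasDerivAt_cos θ).const_mul R
        have h2 := (Real.hasDerivAt_sin θ).const_mul R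
        simpa [mul_neg] using h1.prodMk h2
      have hmem := hmem_lem hDU (R := R) θ
      have hd : HasFDerivAt α (fderiv ℝ α ((R * Real.cos θ, R * Real.sin θ) : ℝ × ℝ))
          ((R * Real.cos θ, R * Real.sin θ) : ℝ × ℝ) :=
        ((hα.contDiffAt (hU.mem_nhds hmem)).differentiableAt (by simp)).hasFDerivAt
      have h := hd.comp_hasDerivAt θ hc
      have hval : fderiv ℝ α ((R * Real.cos θ, R * Real.sin θ) : ℝ × ℝ)
          (-(R * Real.sin θ), R * Real.cos θ) = 0 := by
        rw [clm_pair_decomp]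
        have := hTz θ
        simpa [pdx, pdy] using this
      rw [hval] at h
      exact h
    have hdiff : Differentiable ℝ (fun θ : ℝ => α (R * Real.cos θ, R * Real.sin θ)) :=
      fun θ => (hu θ).differentiableAt
    have hconst := is_const_of_deriv_eq_zero hdiff (fun θ => (hu θ).deriv) θx θy
    rw [hθx, hθy] at hconst
    exact hconst
end

section
/- Let σ : ℝⁿ → ℝⁿ be a smooth compactly supported vector field satisfying the flat momentum constraint, i.e. Δσ_j = ∂_j(div σ) for each j (equivalently ∑_i ∂_i(∂_i σ_j − ∂_j σ_i) = 0). Then ∫_{ℝⁿ} [ ∑_{i,j} ∂_{(i}σ_{j)} ∂^{(i}σ^{j)} − (div σ)² ] dx = 0, i.e. the kinetic metric on the space of vacua evaluated on σ vanishes in the absence of a boundary. -/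
open MeasureTheory

section Aux
variable {n : ℕ}

lemma contDiff_pd {f : (Fin n → ℝ) → ℝ} (hf : ContDiff ℝ (⊤ : ℕ∞) f) (i : Fin n) :
    ContDiff ℝ (⊤ : ℕ∞) (pd i f) :=
  (ContinuousLinearMap.apply ℝ ℝ (Pi.single i 1 : Fin n → ℝ)).contDiff.comp
    (hf.fderiv_right (m := (⊤ : ℕ∞)) (by simp))

lemma hcs_pd {f : (Fin n → ℝ) → ℝ} (h : HasCompactSupport f) (i : Fin n) :
    HasCompactSupport (pd i f) :=
  HasCompactSupport.fderiv_apply (𝕜 := ℝ) h (Pi.single i 1)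

lemma ibp (i : Fin n) {f g : (Fin n → ℝ) → ℝ} (hf : ContDiff ℝ (⊤ : ℕ∞) f) (hg : ContDiff ℝ (⊤ : ℕ∞) g)
    (hcf : HasCompactSupport f) :
    ∫ x, f x * pd i g x = - ∫ x, pd i f x * g x := by
  apply integral_mul_fderiv_eq_neg_fderiv_mul_of_integrable
  · exact ((contDiff_pd hf i).continuous.mul hg.continuous).integrable_of_hasCompactSupport
      ((hcs_pd hcf i).mul_right)
  · exact (hf.continuous.mul (contDiff_pd hg i).continuous).integrable_of_hasCompactSupport
      hcf.mul_right
  · exact (hf.continuous.mul hg.continuous).integrable_of_hasCompactSupport hcf.mul_right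
  · exact fun x _ => hf.differentiable (by simp) x
  · exact fun x _ => hg.differentiable (by simp) x

lemma pd_fderiv {f : (Fin n → ℝ) → ℝ} (hf : ContDiff ℝ (⊤ : ℕ∞) f) (j : Fin n) (x v : Fin n → ℝ) :
    fderiv ℝ (pd j f) x v = fderiv ℝ (fderiv ℝ f) x v (Pi.single j 1) := by
  have h1 : DifferentiableAt ℝ (fderiv ℝ f) x :=
    ((hf.fderiv_right (m := (⊤ : ℕ∞)) (by simp)).differentiable (by simp)) x
  have h2 := ((ContinuousLinearMap.apply ℝ ℝ (Pi.single j 1 : Fin n → ℝ)).hasFDerivAt.comp x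
    h1.hasFDerivAt).fderiv
  have h3 : fderiv ℝ (pd j f) x =
      ((ContinuousLinearMap.apply ℝ ℝ (Pi.single j 1 : Fin n → ℝ)).comp
        (fderiv ℝ (fderiv ℝ f) x)) := h2
  rw [h3]; rfl

lemma pd_comm {f : (Fin n → ℝ) → ℝ} (hf : ContDiff ℝ (⊤ : ℕ∞) f) (i j : Fin n) (x : Fin n → ℝ) :
    pd i (pd j f) x = pd j (pd i f) x := by
  have hsymm : IsSymmSndFDerivAt ℝ f x :=
    hf.contDiffAt.isSymmSndFDerivAt (by rw [minSmoothness_of_isRCLikeNormedField]; exact WithTop.coe_le_coe.mpr le_top)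
  show fderiv ℝ (pd j f) x (Pi.single i 1) = fderiv ℝ (pd i f) x (Pi.single j 1)
  rw [pd_fderiv hf j x, pd_fderiv hf i x, hsymm.eq]

lemma sum_sym (a : Fin n → Fin n → ℝ) :
    ∑ i, ∑ j, ((a i j + a j i)/2) * ((a i j + a j i)/2)
      = ∑ i, ∑ j, (a i j * a i j / 2 + a i j * a j i / 2) := by
  have expand : ∀ i j : Fin n, ((a i j + a j i)/2) * ((a i j + a j i)/2)
      = (a i j * a i j / 2 + a i j * a j i / 2)
        + ((a j i * a j i) - (a i j * a i j))/4 := fun i j => by ring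
  simp only [expand, Finset.sum_add_distrib]
  have z : ∑ i, ∑ j, ((a j i * a j i) - (a i j * a i j))/4 = 0 := by
    simp only [← Finset.sum_div, Finset.sum_sub_distrib]
    rw [Finset.sum_comm (f := fun j i => a j i * a j i)]
    simp
  rw [z, add_zero]
end Aux

/-- For a smooth compactly supported vector field `σ` on `ℝⁿ` satisfying the flat momentum
constraint `∑ᵢ ∂ᵢ(∂ᵢσⱼ − ∂ⱼσᵢ) = 0`, the kinetic metric evaluated on `σ` vanishes:
`∫ [ ∑_{i,j} ∂₍ᵢσⱼ₎ ∂⁽ⁱσʲ⁾ − (div σ)² ] dx = 0`. -/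
theorem kinetic_metric_vanishes_without_boundary
    {n : ℕ} (σ : (Fin n → ℝ) → Fin n → ℝ)
    (hσ : ContDiff ℝ (⊤ : ℕ∞) σ) (hsupp : HasCompactSupport σ)
    (hmom : ∀ (j : Fin n) (x : Fin n → ℝ),
      ∑ i : Fin n,
        pd i (fun y => pd i (fun z => σ z j) y - pd j (fun z => σ z i) y) x = 0) :
    ∫ x : Fin n → ℝ,
      ((∑ i : Fin n, ∑ j : Fin n,
          ((pd i (fun y => σ y j) x + pd j (fun y => σ y i) x) / 2) *
            ((pd i (fun y => σ y j) x + pd j (fun y => σ y i) x) / 2))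
        - (∑ i : Fin n, pd i (fun y => σ y i) x) ^ 2) = 0 := by
  have hs : ∀ j : Fin n, ContDiff ℝ (⊤ : ℕ∞) (fun y => σ y j) := fun j =>
    (ContinuousLinearMap.proj (R := ℝ) (φ := fun _ : Fin n => ℝ) j).contDiff.comp hσ
  have hcs : ∀ j : Fin n, HasCompactSupport (fun y => σ y j) := fun j =>
    hsupp.comp_left (g := fun v : Fin n → ℝ => v j) rfl
  have hD : ∀ i j : Fin n, ContDiff ℝ (⊤ : ℕ∞) (pd i (fun y => σ y j)) := fun i j =>
    contDiff_pd (hs j) i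
  have hDc : ∀ i j : Fin n, HasCompactSupport (pd i (fun y => σ y j)) := fun i j =>
    hcs_pd (hcs j) i
  have hint : ∀ f g : (Fin n → ℝ) → ℝ, ContDiff ℝ (⊤ : ℕ∞) f → ContDiff ℝ (⊤ : ℕ∞) g →
      HasCompactSupport f → Integrable (fun x => f x * g x) := fun f g cf cg h =>
    (cf.continuous.mul cg.continuous).integrable_of_hasCompactSupport h.mul_right
  -- the momentum constraint, rewritten
  have hmom' : ∀ (j : Fin n) (x : Fin n → ℝ),
      ∑ i : Fin n, pd i (pd i (fun y => σ y j)) x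
        = ∑ i : Fin n, pd i (pd j (fun y => σ y i)) x := by
    intro j x
    have h := hmom j x
    have hsplit : ∀ i : Fin n,
        pd i (fun y => pd i (fun z => σ z j) y - pd j (fun z => σ z i) y) x
          = pd i (pd i (fun y => σ y j)) x - pd i (pd j (fun y => σ y i)) x := by
      intro i
      show fderiv ℝ (fun y => pd i (fun z => σ z j) y - pd j (fun z => σ z i) y) x
          (Pi.single i 1) = _
      rw [fderiv_fun_sub ((hD i j).differentiable (by simp) x) ((hD j i).differentiable (by simp) x)]
      rfl
    simp only [hsplit, Finset.sum_sub_distrib] at h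
    linarith
  -- claim 2 : ∫ ∂ᵢσⱼ ∂ⱼσᵢ = ∫ ∂ᵢσᵢ ∂ⱼσⱼ
  have claim2 : ∀ i j : Fin n,
      (∫ x, pd i (fun y => σ y j) x * pd j (fun y => σ y i) x)
        = ∫ x, pd i (fun y => σ y i) x * pd j (fun y => σ y j) x := by
    intro i j
    calc (∫ x, pd i (fun y => σ y j) x * pd j (fun y => σ y i) x)
        = ∫ x, pd j (fun y => σ y i) x * pd i (fun y => σ y j) x :=
          integral_congr_ae (Filter.Eventually.of_forall fun x => mul_comm _ _)
      _ = - ∫ x, pd i (pd j (fun y => σ y i)) x * σ x j :=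
          ibp i (hD j i) (hs j) (hDc j i)
      _ = - ∫ x, pd j (pd i (fun y => σ y i)) x * σ x j := by
          refine congrArg Neg.neg (integral_congr_ae (Filter.Eventually.of_forall fun x => ?_))
          exact congrArg (· * σ x j) (pd_comm (hs i) i j x)
      _ = - ∫ x, σ x j * pd j (pd i (fun y => σ y i)) x :=
          congrArg Neg.neg (integral_congr_ae (Filter.Eventually.of_forall fun x => mul_comm _ _))
      _ = - - ∫ x, pd j (fun y => σ y j) x * pd i (fun y => σ y i) x :=
          congrArg Neg.neg (ibp j (hs j) (hD i i) (hcs j))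
      _ = ∫ x, pd j (fun y => σ y j) x * pd i (fun y => σ y i) x := neg_neg _
      _ = ∫ x, pd i (fun y => σ y i) x * pd j (fun y => σ y j) x :=
          integral_congr_ae (Filter.Eventually.of_forall fun x => mul_comm _ _)
  -- claim 1 : ∑ᵢ ∫ (∂ᵢσⱼ)² = ∑ᵢ ∫ ∂ᵢσⱼ ∂ⱼσᵢ  (uses the momentum constraint)
  have claim1 : ∀ j : Fin n,
      (∑ i : Fin n, ∫ x, pd i (fun y => σ y j) x * pd i (fun y => σ y j) x)
        = ∑ i : Fin n, ∫ x, pd i (fun y => σ y j) x * pd j (fun y => σ y i) x := by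
    intro j
    have h1 : ∀ i : Fin n, (∫ x, pd i (fun y => σ y j) x * pd i (fun y => σ y j) x)
        = - ∫ x, pd i (pd i (fun y => σ y j)) x * σ x j := fun i =>
      ibp i (hD i j) (hs j) (hDc i j)
    have h2 : ∀ i : Fin n, (∫ x, pd i (fun y => σ y j) x * pd j (fun y => σ y i) x)
        = - ∫ x, pd i (pd j (fun y => σ y i)) x * σ x j := by
      intro i
      calc (∫ x, pd i (fun y => σ y j) x * pd j (fun y => σ y i) x)
          = ∫ x, pd j (fun y => σ y i) x * pd i (fun y => σ y j) x :=
            integral_congr_ae (Filter.Eventually.of_forall fun x => mul_comm _ _)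
        _ = - ∫ x, pd i (pd j (fun y => σ y i)) x * σ x j :=
            ibp i (hD j i) (hs j) (hDc j i)
    simp only [h1, h2]
    rw [Finset.sum_neg_distrib, Finset.sum_neg_distrib]
    congr 1
    rw [← integral_finset_sum _ (fun i _ =>
        hint _ _ (contDiff_pd (hD i j) i) (hs j) (hcs_pd (hDc i j) i)),
      ← integral_finset_sum _ (fun i _ =>
        hint _ _ (contDiff_pd (hD j i) i) (hs j) (hcs_pd (hDc j i) i))]
    refine integral_congr_ae (Filter.Eventually.of_forall fun x => ?_)
    show (∑ i : Fin n, pd i (pd i fun y => σ y j) x * σ x j)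
        = ∑ i : Fin n, pd i (pd j fun y => σ y i) x * σ x j
    rw [← Finset.sum_mul, ← Finset.sum_mul, hmom' j x]
  -- pointwise rewriting of the integrand
  have step0 : ∀ x : Fin n → ℝ,
      ((∑ i : Fin n, ∑ j : Fin n,
          ((pd i (fun y => σ y j) x + pd j (fun y => σ y i) x) / 2) *
            ((pd i (fun y => σ y j) x + pd j (fun y => σ y i) x) / 2))
        - (∑ i : Fin n, pd i (fun y => σ y i) x) ^ 2)
      = ∑ i : Fin n, ∑ j : Fin n,
          (pd i (fun y => σ y j) x * pd i (fun y => σ y j) x / 2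
            + pd i (fun y => σ y j) x * pd j (fun y => σ y i) x / 2
            - pd i (fun y => σ y i) x * pd j (fun y => σ y j) x) := by
    intro x
    rw [sum_sym (a := fun i j => pd i (fun y => σ y j) x), sq, Finset.sum_mul_sum]
    simp only [← Finset.sum_sub_distrib]
  -- integrability of each summand
  have hG : ∀ i j : Fin n, Integrable (fun x =>
      pd i (fun y => σ y j) x * pd i (fun y => σ y j) x / 2
        + pd i (fun y => σ y j) x * pd j (fun y => σ y i) x / 2
        - pd i (fun y => σ y i) x * pd j (fun y => σ y j) x) := fun i j =>
    (((hint _ _ (hD i j) (hD i j) (hDc i j)).div_const 2).add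
      ((hint _ _ (hD i j) (hD j i) (hDc i j)).div_const 2)).sub
      (hint _ _ (hD i i) (hD j j) (hDc i i))
  calc (∫ x : Fin n → ℝ,
      ((∑ i : Fin n, ∑ j : Fin n,
          ((pd i (fun y => σ y j) x + pd j (fun y => σ y i) x) / 2) *
            ((pd i (fun y => σ y j) x + pd j (fun y => σ y i) x) / 2))
        - (∑ i : Fin n, pd i (fun y => σ y i) x) ^ 2))
      = ∫ x, ∑ i : Fin n, ∑ j : Fin n,
          (pd i (fun y => σ y j) x * pd i (fun y => σ y j) x / 2
            + pd i (fun y => σ y j) x * pd j (fun y => σ y i) x / 2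
            - pd i (fun y => σ y i) x * pd j (fun y => σ y j) x) :=
        integral_congr_ae (Filter.Eventually.of_forall step0)
    _ = ∑ i : Fin n, ∑ j : Fin n, ∫ x,
          (pd i (fun y => σ y j) x * pd i (fun y => σ y j) x / 2
            + pd i (fun y => σ y j) x * pd j (fun y => σ y i) x / 2
            - pd i (fun y => σ y i) x * pd j (fun y => σ y j) x) := by
        rw [integral_finset_sum _ (fun i _ => integrable_finset_sum _ (fun j _ => hG i j))]
        exact Finset.sum_congr rfl fun i _ => integral_finset_sum _ (fun j _ => hG i j)
    _ = ∑ i : Fin n, ∑ j : Fin n,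
          ((∫ x, pd i (fun y => σ y j) x * pd i (fun y => σ y j) x) / 2
            + (∫ x, pd i (fun y => σ y j) x * pd j (fun y => σ y i) x) / 2
            - ∫ x, pd i (fun y => σ y i) x * pd j (fun y => σ y j) x) := by
        refine Finset.sum_congr rfl fun i _ => Finset.sum_congr rfl fun j _ => ?_
        have hA := (hint _ _ (hD i j) (hD i j) (hDc i j)).div_const 2
        have hB := (hint _ _ (hD i j) (hD j i) (hDc i j)).div_const 2
        have hC := hint _ _ (hD i i) (hD j j) (hDc i i)
        calc (∫ x, (pd i (fun y => σ y j) x * pd i (fun y => σ y j) x / 2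
              + pd i (fun y => σ y j) x * pd j (fun y => σ y i) x / 2
              - pd i (fun y => σ y i) x * pd j (fun y => σ y j) x))
            = (∫ x, (pd i (fun y => σ y j) x * pd i (fun y => σ y j) x / 2
                + pd i (fun y => σ y j) x * pd j (fun y => σ y i) x / 2))
              - ∫ x, pd i (fun y => σ y i) x * pd j (fun y => σ y j) x :=
              integral_sub (hA.add hB) hC
          _ = (∫ x, pd i (fun y => σ y j) x * pd i (fun y => σ y j) x / 2)
              + (∫ x, pd i (fun y => σ y j) x * pd j (fun y => σ y i) x / 2)
              - ∫ x, pd i (fun y => σ y i) x * pd j (fun y => σ y j) x := by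
              rw [integral_add hA hB]
          _ = (∫ x, pd i (fun y => σ y j) x * pd i (fun y => σ y j) x) / 2
              + (∫ x, pd i (fun y => σ y j) x * pd j (fun y => σ y i) x) / 2
              - ∫ x, pd i (fun y => σ y i) x * pd j (fun y => σ y j) x := by
              rw [integral_div, integral_div]
    _ = 0 := by
        simp only [Finset.sum_add_distrib, Finset.sum_sub_distrib, ← Finset.sum_div]
        have e1 : (∑ i : Fin n, ∑ j : Fin n,
            ∫ x, pd i (fun y => σ y j) x * pd i (fun y => σ y j) x)
            = ∑ i : Fin n, ∑ j : Fin n,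
                ∫ x, pd i (fun y => σ y j) x * pd j (fun y => σ y i) x := by
          calc (∑ i : Fin n, ∑ j : Fin n,
              ∫ x, pd i (fun y => σ y j) x * pd i (fun y => σ y j) x)
              = ∑ j : Fin n, ∑ i : Fin n,
                  ∫ x, pd i (fun y => σ y j) x * pd i (fun y => σ y j) x :=
                Finset.sum_comm
            _ = ∑ j : Fin n, ∑ i : Fin n,
                  ∫ x, pd i (fun y => σ y j) x * pd j (fun y => σ y i) x :=
                Finset.sum_congr rfl fun j _ => claim1 j
            _ = ∑ i : Fin n, ∑ j : Fin n,
                  ∫ x, pd i (fun y => σ y j) x * pd j (fun y => σ y i) x :=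
                Finset.sum_comm
        have e2 : (∑ i : Fin n, ∑ j : Fin n,
            ∫ x, pd i (fun y => σ y i) x * pd j (fun y => σ y j) x)
            = ∑ i : Fin n, ∑ j : Fin n,
                ∫ x, pd i (fun y => σ y j) x * pd j (fun y => σ y i) x :=
          Finset.sum_congr rfl fun i _ => Finset.sum_congr rfl fun j _ => (claim2 i j).symm
        rw [e1, e2]
        ring
end
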